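/- arXiv:1805.10189 — 9 statements merged into one kernel-verified Lean document; each statement's English description precedes it below -/
import Mathlib

section
/- Let p > 0, let T = ℝ/pℤ (the additive circle of circumference p) with its quotient metric and Haar probability measure μ. Let φ : T → ℝ be a bounded positive Borel function, let φ̄ := ∫_T φ dμ, and let κ ≥ 0 satisfy exp(−κ)·φ̄ ≤ φ(x) for every x ∈ T. Then d_L(φ·μ, φ̄·μ) ≤ κ · diam(T) (note diam(T) = p/2). -/
/-!
It suffices to test closed sets `B`. If `B` is nonempty and `B_ε ≠ T`, cut the circle at a
point outside `B_ε`: the two open intervals of length `ε` just below and just above the lift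
of `B` lie in `B_ε \ B`,
so `μ(B_ε) ≥ μ(B) + 2ε/p ≥ μ(B) + κ` as soon as `ε ≥ κ p / 2`, and hence
`μ(B_ε) ≥ 1 - e^{-κ}(1 - μ(B))`. On the other hand `φ ≥ e^{-κ} φ̄` gives
`∫_B φ = φ̄ - ∫_{Bᶜ} φ ≤ φ̄ (1 - e^{-κ}(1 - μ(B)))`, which is therefore at most `φ̄ μ(B_ε)`.
-/

open MeasureTheory Set Metric

theorem Real.volume_add_le_volume_thickening {S : Set ℝ} (hne : S.Nonempty)
    (hS_below : BddBelow S) (hS_above : BddAbove S) {ε : ℝ} (hε : 0 < ε) :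
    volume S + ENNReal.ofReal (2 * ε) ≤ volume (thickening ε S) := by
  set i := sInf S
  set s := sSup S
  have his : i ≤ s := csInf_le_csSup hne hS_below hS_above
  have hleft : Ioo (i - ε) i ⊆ thickening ε S := by
    rw [← thickening_closure]
    refine Subset.trans ?_ (ball_subset_thickening (csInf_mem_closure hne hS_below) ε)
    rw [Real.ball_eq_Ioo]
    exact Ioo_subset_Ioo_right (by linarith)
  have hright : Ioo s (s + ε) ⊆ thickening ε S := by
    rw [← thickening_closure]
    refine Subset.trans ?_ (ball_subset_thickening (csSup_mem_closure hne hS_above) ε)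
    rw [Real.ball_eq_Ioo]
    exact Ioo_subset_Ioo_left (by linarith)
  have hdisj : Disjoint (Ioo (i - ε) i) (Ioo s (s + ε)) :=
    disjoint_left.mpr fun y hy hy' => by linarith [hy.2, hy'.1]
  have hdisj' : Disjoint S (Ioo (i - ε) i ∪ Ioo s (s + ε)) := by
    refine disjoint_left.mpr fun y hy hy' => ?_
    rcases hy' with hy' | hy'
    · exact hy'.2.not_ge (csInf_le hS_below hy)
    · exact hy'.1.not_ge (le_csSup hS_above hy)
  calc volume S + ENNReal.ofReal (2 * ε)
      = volume S + (volume (Ioo (i - ε) i) + volume (Ioo s (s + ε))) := by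
        rw [Real.volume_Ioo, Real.volume_Ioo, sub_sub_cancel, add_sub_cancel_left,
          ← ENNReal.ofReal_add hε.le hε.le, two_mul]
    _ = volume (S ∪ (Ioo (i - ε) i ∪ Ioo s (s + ε))) := by
        rw [measure_union hdisj' (measurableSet_Ioo.union measurableSet_Ioo),
          measure_union hdisj measurableSet_Ioo]
    _ ≤ volume (thickening ε S) :=
        measure_mono (union_subset (self_subset_thickening hε S) (union_subset hleft hright))

namespace AddCircle

variable {p : ℝ}

theorem dist_coe_le_dist (u v : ℝ) : dist (u : AddCircle p) v ≤ dist u v := by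
  rw [dist_eq_norm, dist_eq_norm, ← coe_sub]
  exact QuotientAddGroup.norm_mk_le_norm

variable [hp : Fact (0 < p)]

theorem half_period_le_diam_univ : p / 2 ≤ diam (univ : Set (AddCircle p)) := by
  have : dist (0 : AddCircle p) ↑(p / 2) = p / 2 := by
    rw [dist_zero_left, norm_half_period_eq, abs_of_pos hp.out]
  exact this ▸ dist_le_diam_of_mem isBounded_of_compactSpace (mem_univ _) (mem_univ _)

theorem volume_add_le_volume_thickening {B : Set (AddCircle p)} (hB : MeasurableSet B)
    (hne : B.Nonempty) {ε : ℝ} (hε : 0 < ε) (hB_ne_univ : thickening ε B ≠ univ) :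
    volume B + ENNReal.ofReal (2 * ε) ≤ volume (thickening ε B) := by
  obtain ⟨x, hx⟩ := (ne_univ_iff_exists_notMem _).mp hB_ne_univ
  obtain ⟨t, rfl⟩ := QuotientAddGroup.mk_surjective x
  -- Cut the circle at `t ∉ B_ε`: the lift `S` of `B` to `(t, t + p]` stays `ε` away from both
  -- ends, so its thickening in `ℝ` still lies in `(t, t + p]` and projects into `B_ε`.
  set S := ((↑) : ℝ → AddCircle p) ⁻¹' B ∩ Ioc t (t + p)
  have hS : S ⊆ Icc (t + ε) (t + p - ε) := by
    rintro a ⟨haB, hat⟩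
    have far : ∀ u : ℝ, (u : AddCircle p) = t → ε ≤ |u - a| := fun u hu => by
      by_contra! h
      exact hx (mem_thickening_iff.mpr ⟨a, haB, hu ▸ (dist_coe_le_dist u a).trans_lt h⟩)
    have h₁ := far t rfl
    have h₂ := far (t + p) (coe_add_period p t)
    rw [abs_of_neg (by linarith [hat.1])] at h₁
    rw [abs_of_nonneg (by linarith [hat.2])] at h₂
    constructor <;> linarith
  have hS_ne : S.Nonempty := by
    obtain ⟨b, hb⟩ := hne
    obtain ⟨a, ha, rfl⟩ : b ∈ ((↑) : ℝ → AddCircle p) '' Ioc t (t + p) := by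
      rw [coe_image_Ioc_eq]; trivial
    exact ⟨a, hb, ha⟩
  have hthick : thickening ε S ⊆ (↑) ⁻¹' thickening ε B ∩ Ioc t (t + p) := by
    intro y hy
    obtain ⟨a, ha, hya⟩ := mem_thickening_iff.mp hy
    have hat := hS ha
    rw [Real.dist_eq, abs_lt] at hya
    refine ⟨mem_thickening_iff.mpr ⟨a, ha.1, (dist_coe_le_dist y a).trans_lt ?_⟩, ?_, ?_⟩
    · rwa [Real.dist_eq, abs_lt]
    all_goals linarith [hat.1, hat.2]
  calc volume B + ENNReal.ofReal (2 * ε) = volume S + ENNReal.ofReal (2 * ε) := by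
        rw [add_projection_respects_measure p t hB]
    _ ≤ volume (thickening ε S) :=
        Real.volume_add_le_volume_thickening hS_ne ⟨t + ε, fun _ ha => (hS ha).1⟩
          ⟨t + p - ε, fun _ ha => (hS ha).2⟩ hε
    _ ≤ volume ((↑) ⁻¹' thickening ε B ∩ Ioc t (t + p)) := measure_mono hthick
    _ = volume (thickening ε B) :=
        (add_projection_respects_measure p t isOpen_thickening.measurableSet).symm

theorem haarAddCircle_real_add_le_real_thickening {B : Set (AddCircle p)} (hB : MeasurableSet B)
    (hne : B.Nonempty) {ε : ℝ} (hε : 0 < ε) (hB_ne_univ : thickening ε B ≠ univ) :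
    haarAddCircle.real B + 2 * ε / p ≤ haarAddCircle.real (thickening ε B) := by
  have hvol : ∀ X : Set (AddCircle p), volume.real X = p * haarAddCircle.real X := fun X => by
    rw [measureReal_def, measureReal_def, volume_eq_smul_haarAddCircle, Measure.smul_apply,
      smul_eq_mul, ENNReal.toReal_mul, ENNReal.toReal_ofReal hp.out.le]
  have h := ENNReal.toReal_mono (measure_ne_top _ _)
    (volume_add_le_volume_thickening hB hne hε hB_ne_univ)
  rw [ENNReal.toReal_add (measure_ne_top _ _) ENNReal.ofReal_ne_top,
    ENNReal.toReal_ofReal (by positivity), ← measureReal_def, ← measureReal_def, hvol, hvol] at h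
  rw [add_div' _ _ _ hp.out.ne', div_le_iff₀ hp.out]
  linarith

theorem one_sub_exp_neg_mul_le_haarAddCircle_real_thickening {B : Set (AddCircle p)}
    (hB : MeasurableSet B) (hne : B.Nonempty) {κ ε : ℝ} (hκ : 0 ≤ κ) (hε : 0 < ε)
    (hκε : κ * (p / 2) ≤ ε) :
    1 - Real.exp (-κ) * (1 - haarAddCircle.real B) ≤ haarAddCircle.real (thickening ε B) := by
  have ha₀ : 0 ≤ haarAddCircle.real B := measureReal_nonneg
  have ha₁ : haarAddCircle.real B ≤ 1 := measureReal_le_one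
  by_cases hu : thickening ε B = univ
  · rw [hu, probReal_univ]
    nlinarith [Real.exp_pos (-κ)]
  · have h := haarAddCircle_real_add_le_real_thickening hB hne hε hu
    have hκ_le : κ ≤ 2 * ε / p := by rw [le_div_iff₀ hp.out]; linarith
    have hexp : 1 - κ ≤ Real.exp (-κ) := by linarith [Real.add_one_le_exp (-κ)]
    nlinarith [mul_nonneg (sub_nonneg.mpr hexp) (sub_nonneg.mpr ha₁), mul_nonneg hκ ha₀]

end AddCircle

theorem setIntegral_le_integral_sub_mul_measureReal_compl {Ω : Type*} [MeasurableSpace Ω]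
    {μ : Measure Ω} [IsFiniteMeasure μ] {f : Ω → ℝ} (hf : Integrable f μ) {c : ℝ}
    (hc : ∀ x, c ≤ f x) {s : Set Ω} (hs : MeasurableSet s) :
    ∫ x in s, f x ∂μ ≤ ∫ x, f x ∂μ - c * μ.real sᶜ := by
  have := setIntegral_ge_of_const_le_real hs.compl (measure_ne_top μ _) (fun x _ => hc x)
    hf.integrableOn
  linarith [integral_add_compl hs hf]

/-- The Lévy–Prokhorov-type distance of the paper:
`d_L(μ, ν) = inf {ε > 0 | ∀ A, ν(A_ε) ≥ μ(A)}`, where `A_ε` is the open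
`ε`-neighborhood of `A`. -/
noncomputable def levyDist {X : Type*} [PseudoMetricSpace X] [MeasurableSpace X]
    (μ ν : Measure X) : ℝ :=
  sInf {ε : ℝ | 0 < ε ∧ ∀ A : Set X, μ A ≤ ν (Metric.thickening ε A)}

theorem levyDist_le_of_forall_isClosed {X : Type*} [PseudoMetricSpace X] [MeasurableSpace X]
    {μ ν : Measure X} {r : ℝ} (hr : 0 ≤ r)
    (h : ∀ ε, r < ε → ∀ A : Set X, IsClosed A → μ A ≤ ν (thickening ε A)) :
    levyDist μ ν ≤ r := by
  refine le_of_forall_pos_le_add fun δ hδ =>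
    csInf_le ⟨0, fun _ hε => hε.1.le⟩ ⟨by positivity, fun A => ?_⟩
  calc μ A ≤ μ (closure A) := measure_mono subset_closure
    _ ≤ ν (thickening (r + δ) (closure A)) := h _ (by linarith) _ isClosed_closure
    _ = ν (thickening (r + δ) A) := by rw [thickening_closure]

/-- Lemma 18.0.7: on the circle `T = ℝ/pℤ` with Haar probability measure `μ`,
if `φ` is a bounded positive Borel function with average `φ̄` and
`exp(−κ)·φ̄ ≤ φ`, then `d_L(φ·μ, φ̄·μ) ≤ κ · diam T`. -/
theorem stmt6 {p : ℝ} [hp : Fact (0 < p)]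
    (φ : AddCircle p → ℝ) (hmeas : Measurable φ)
    (hbdd : ∃ C : ℝ, ∀ x, φ x ≤ C) (hpos : ∀ x, 0 < φ x)
    {κ : ℝ} (hκ : 0 ≤ κ)
    (h : ∀ x, Real.exp (-κ) * (∫ y, φ y ∂(AddCircle.haarAddCircle)) ≤ φ x) :
    levyDist
      (AddCircle.haarAddCircle.withDensity fun x => ENNReal.ofReal (φ x))
      (AddCircle.haarAddCircle.withDensity fun _ =>
        ENNReal.ofReal (∫ y, φ y ∂(AddCircle.haarAddCircle)))
      ≤ κ * Metric.diam (Set.univ : Set (AddCircle p)) := by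
  set μ : Measure (AddCircle p) := AddCircle.haarAddCircle
  set c := ∫ y, φ y ∂μ
  obtain ⟨C, hC⟩ := hbdd
  have hφ_int : Integrable φ μ := Integrable.of_bound hmeas.aestronglyMeasurable C
    (ae_of_all _ fun x => by rw [Real.norm_of_nonneg (hpos x).le]; exact hC x)
  have hc : 0 ≤ c := integral_nonneg fun x => (hpos x).le
  refine levyDist_le_of_forall_isClosed (mul_nonneg hκ diam_nonneg) fun ε hε A hA => ?_
  rcases A.eq_empty_or_nonempty with rfl | hA_ne
  · simp
  have hκε : κ * (p / 2) ≤ ε :=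
    (mul_le_mul_of_nonneg_left AddCircle.half_period_le_diam_univ hκ).trans hε.le
  have hε_pos : 0 < ε := (mul_nonneg hκ diam_nonneg).trans_lt hε
  have hbound : ∫ x in A, φ x ∂μ ≤ c * μ.real (thickening ε A) := calc
    ∫ x in A, φ x ∂μ ≤ c - Real.exp (-κ) * c * μ.real Aᶜ :=
        setIntegral_le_integral_sub_mul_measureReal_compl hφ_int h hA.measurableSet
    _ = c * (1 - Real.exp (-κ) * (1 - μ.real A)) := by
        rw [probReal_compl_eq_one_sub hA.measurableSet]; ring
    _ ≤ c * μ.real (thickening ε A) := mul_le_mul_of_nonneg_left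
        (AddCircle.one_sub_exp_neg_mul_le_haarAddCircle_real_thickening hA.measurableSet hA_ne
          hκ hε_pos hκε) hc
  rw [withDensity_apply _ hA.measurableSet, withDensity_const, Measure.smul_apply, smul_eq_mul,
    ← ofReal_integral_eq_lintegral_ofReal hφ_int.integrableOn (ae_of_all _ fun x => (hpos x).le),
    ← ofReal_measureReal (measure_ne_top _ _), ← ENNReal.ofReal_mul hc]
  exact ENNReal.ofReal_le_ofReal hbound
end

section
/- Let p > 0, let T = ℝ/pℤ be the additive circle of circumference p with its quotient metric and Haar probability measure ν_T, let X₀ be a metric space, and equip X := T × X₀ with the ℓ¹ product metric d((θ,x),(θ',x')) = d_T(θ,θ') + d₀(x,x'). Let μ be a finite Borel measure on X invariant under the translations (θ,x) ↦ (θ+t, x) for all t ∈ T. Let φ : X → ℝ be a bounded positive Borel function, set φ̄(θ,x) := ∫_T φ(θ+t, x) dν_T(t), and let κ ≥ 0 satisfy (1−κ)·φ̄ ≤ φ ≤ (1+κ)·φ̄ pointwise. Then d_L(φ·μ, φ̄·μ) ≤ κ · diam(T). -/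
open MeasureTheory

/-- The Lévy–Prokhorov-type distance of the paper, computed with an explicit
distance function `d`: `d_L^d(μ, ν) = inf {ε > 0 | ∀ A, ν(A_ε) ≥ μ(A)}`, where
`A_ε = {x | ∃ a ∈ A, d x a < ε}` is the open `ε`-neighborhood of `A` for `d`. -/
noncomputable def levyDistD {X : Type*} [MeasurableSpace X] (d : X → X → ℝ)
    (μ ν : Measure X) : ℝ :=
  sInf {ε : ℝ | 0 < ε ∧ ∀ A : Set X, μ A ≤ ν {x | ∃ a ∈ A, d x a < ε}}

/-!
Write `φ̄(θ, x) = c x` for the fibre average and `ρ = φ / φ̄`, so that `ρ(·, x)` is a probability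
density on each circle fibre with `|ρ - 1| ≤ κ`. On a fibre, the distribution function
`θ ↦ ∫₀^θ ρ`, read modulo `p` (`circleCDF`), pushes `ρ · ν_T` forward to `ν_T` and moves every
point by at most `κ · p / 2 ≤ κ · diam T`: the error `∫₀^y (ρ - 1)` is at most `κ y`, and also at
most `κ (p - y)` because `∫₀^p (ρ - 1) = 0`. Doing this on every fibre gives a map `S` with
`S_*(φ · μ) = φ̄ · μ`, since by `T`-invariance integrating against `μ` is the same as first
averaging over each fibre. Then `φ · μ(A) ≤ φ · μ(S⁻¹ A_ε) ≤ φ̄ · μ(A_ε)` for every `ε > κ · p / 2`.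
-/

open Set
open scoped ENNReal

lemma levyDistD_le_of_map_eq {X : Type*} [MeasurableSpace X] {d : X → X → ℝ}
    {μ ν : Measure X} {S : X → X} (hS : AEMeasurable S μ) (hmap : μ.map S = ν) {δ : ℝ}
    (hδ : 0 ≤ δ) (hd : ∀ x, d (S x) x ≤ δ) : levyDistD d μ ν ≤ δ := by
  refine le_of_forall_gt_imp_ge_of_dense fun ε hε =>
    csInf_le ⟨0, fun _ h => h.1.le⟩ ⟨hδ.trans_lt hε, fun A => ?_⟩
  calc μ A ≤ μ (S ⁻¹' {x | ∃ a ∈ A, d x a < ε}) :=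
        measure_mono fun x hx => ⟨x, hx, (hd x).trans_lt hε⟩
    _ ≤ ν {x | ∃ a ∈ A, d x a < ε} := hmap ▸ Measure.le_map_apply hS _

lemma exists_preimage_Iic_inter_Ioc_eq_Ioc {F : ℝ → ℝ} (hmono : Monotone F)
    (hcont : Continuous F) {a b z : ℝ} (hab : a ≤ b) (hz : F a ≤ z) :
    ∃ y ∈ Icc a b, F y = min (F b) z ∧ F ⁻¹' Iic z ∩ Ioc a b = Ioc a y := by
  have hK : IsCompact (Icc a b ∩ F ⁻¹' Iic z) :=
    isCompact_Icc.inter_right (isClosed_Iic.preimage hcont)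
  obtain ⟨y, ⟨hy, hFy⟩, hmax⟩ := hK.exists_isGreatest ⟨a, left_mem_Icc.2 hab, hz⟩
  obtain ⟨y₀, hy₀, hFy₀⟩ : ∃ y₀ ∈ Icc a b, F y₀ = min (F b) z :=
    intermediate_value_Icc hab hcont.continuousOn ⟨le_min (hmono hab) hz, min_le_left _ _⟩
  refine ⟨y, hy, le_antisymm (le_min (hmono hy.2) hFy) ?_, ?_⟩
  · exact hFy₀ ▸ hmono (hmax ⟨hy₀, hFy₀.trans_le (min_le_right _ _)⟩)
  · ext x
    exact ⟨fun ⟨hx, hxa, hxb⟩ => ⟨hxa, hmax ⟨⟨hxa.le, hxb⟩, hx⟩⟩,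
      fun ⟨hxa, hxy⟩ => ⟨(hmono hxy).trans hFy, hxa, hxy.trans hy.2⟩⟩

lemma map_primitive_withDensity_restrict_Ioc {ρ : ℝ → ℝ} {p : ℝ} (hp : 0 < p)
    (hρ : ∀ a b, IntervalIntegrable ρ volume a b) (h0 : ∀ u, 0 ≤ ρ u)
    (htot : ∫ u in (0 : ℝ)..p, ρ u = p) :
    ((volume.restrict (Ioc 0 p)).withDensity fun u => ENNReal.ofReal (ρ u)).map
      (fun y => ∫ u in (0 : ℝ)..y, ρ u) = volume.restrict (Ioc 0 p) := by
  set F : ℝ → ℝ := fun y => ∫ u in (0 : ℝ)..y, ρ u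
  have hcont : Continuous F := intervalIntegral.continuous_primitive hρ 0
  have hmono : Monotone F := fun a b hab => by
    simp only [F]
    rw [← intervalIntegral.integral_add_adjacent_intervals (hρ 0 a) (hρ a b)]
    exact le_add_of_nonneg_right (intervalIntegral.integral_nonneg hab fun u _ => h0 u)
  have : IsFiniteMeasure ((volume.restrict (Ioc 0 p)).withDensity
      fun u => ENNReal.ofReal (ρ u)) :=
    isFiniteMeasure_withDensity_ofReal (hρ 0 p).1.hasFiniteIntegral
  have hF0 : F 0 = 0 := intervalIntegral.integral_same
  refine Measure.ext_of_Iic _ _ fun z => ?_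
  have hpre : MeasurableSet (F ⁻¹' Iic z) := hcont.measurable measurableSet_Iic
  rw [Measure.map_apply hcont.measurable measurableSet_Iic, withDensity_apply _ hpre,
    Measure.restrict_restrict hpre, Measure.restrict_apply measurableSet_Iic,
    inter_comm (Iic z), Ioc_inter_Iic, Real.volume_Ioc, sub_zero]
  rcases lt_or_ge z 0 with hz | hz
  · have hempty : F ⁻¹' Iic z ∩ Ioc 0 p = ∅ :=
      eq_empty_of_forall_notMem fun y ⟨hy, hy0, _⟩ =>
        (hz.trans_le (hF0 ▸ hmono hy0.le)).not_ge hy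
    rw [hempty, Measure.restrict_empty, lintegral_zero_measure,
      ENNReal.ofReal_of_nonpos (min_le_of_right_le hz.le)]
  · obtain ⟨y, hy, hFy, hpre⟩ :=
      exists_preimage_Iic_inter_Ioc_eq_Ioc hmono hcont hp.le (hF0.trans_le hz)
    rw [hpre, ← ofReal_integral_eq_lintegral_ofReal (hρ 0 y).1 (.of_forall h0),
      ← intervalIntegral.integral_of_le hy.1]
    exact congrArg ENNReal.ofReal (hFy.trans (congrArg (min · z) htot))

lemma abs_primitive_sub_self_le {ρ : ℝ → ℝ} {p κ : ℝ}
    (hρ : ∀ a b, IntervalIntegrable ρ volume a b) (hκ : ∀ u, |ρ u - 1| ≤ κ)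
    (htot : ∫ u in (0 : ℝ)..p, ρ u = p) {y : ℝ} (hy : y ∈ Icc 0 p) :
    |(∫ u in (0 : ℝ)..y, ρ u) - y| ≤ κ * (p / 2) := by
  have hdev : ∀ a b, |(∫ u in a..b, ρ u) - (b - a)| ≤ κ * |b - a| := fun a b => by
    have := intervalIntegral.norm_integral_le_of_norm_le_const (a := a) (b := b)
      (f := fun u => ρ u - 1) fun u _ => hκ u
    rwa [intervalIntegral.integral_sub (hρ a b) intervalIntegrable_const,
      intervalIntegral.integral_const, smul_eq_mul, mul_one, Real.norm_eq_abs] at this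
  have hκ0 : 0 ≤ κ := (abs_nonneg _).trans (hκ 0)
  rcases le_total y (p / 2) with hhalf | hhalf
  · have := hdev 0 y
    rw [sub_zero, abs_of_nonneg hy.1] at this
    exact this.trans (mul_le_mul_of_nonneg_left hhalf hκ0)
  · have := hdev y p
    rw [← intervalIntegral.integral_interval_sub_left (hρ 0 p) (hρ 0 y), htot,
      abs_of_nonneg (sub_nonneg.2 hy.2),
      show (p - ∫ u in (0 : ℝ)..y, ρ u) - (p - y) = -((∫ u in (0 : ℝ)..y, ρ u) - y) by ring,
      abs_neg] at this
    exact this.trans (mul_le_mul_of_nonneg_left (by linarith) hκ0)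

section FiberAverage

variable {G Y : Type*} [AddGroup G] [MeasurableSpace G] [MeasurableAdd₂ G] [MeasurableSpace Y]
  {ν : Measure G} [IsProbabilityMeasure ν] [ν.IsAddRightInvariant] {μ : Measure (G × Y)}
  [SFinite μ]

lemma lintegral_eq_lintegral_lintegral_of_map_add_eq
    (hinv : ∀ t : G, μ.map (fun q => (t + q.1, q.2)) = μ) {g : G × Y → ℝ≥0∞}
    (hg : Measurable g) : ∫⁻ q, g q ∂μ = ∫⁻ q, ∫⁻ t, g (t, q.2) ∂ν ∂μ := by
  have hshift : ∀ t : G, Measurable fun q : G × Y => (t + q.1, q.2) := fun t =>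
    ((measurable_const_add t).comp measurable_fst).prodMk measurable_snd
  have hg' : Measurable fun z : (G × Y) × G => g (z.2 + z.1.1, z.1.2) :=
    hg.comp ((measurable_snd.add (measurable_fst.comp measurable_fst)).prodMk
      (measurable_snd.comp measurable_fst))
  calc ∫⁻ q, g q ∂μ = ∫⁻ t, ∫⁻ q, g (t + q.1, q.2) ∂μ ∂ν := by
        simp_rw [← lintegral_map hg (hshift _), hinv, lintegral_const, measure_univ, mul_one]
    _ = ∫⁻ q, ∫⁻ t, g (t + q.1, q.2) ∂ν ∂μ := (lintegral_lintegral_swap hg'.aemeasurable).symm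
    _ = ∫⁻ q, ∫⁻ t, g (t, q.2) ∂ν ∂μ :=
        lintegral_congr fun q => lintegral_add_right_eq_self (fun t => g (t, q.2)) q.1

lemma map_withDensity_eq_of_fiberwise (hinv : ∀ t : G, μ.map (fun q => (t + q.1, q.2)) = μ)
    {σ : Y → G → G} (hσ : Measurable fun q : G × Y => (σ q.2 q.1, q.2))
    {f g : G × Y → ℝ≥0∞} (hf : Measurable f) (hg : Measurable g)
    (hfib : ∀ y, (ν.withDensity fun t => f (t, y)).map (σ y) = ν.withDensity fun t => g (t, y)) :
    (μ.withDensity f).map (fun q => (σ q.2 q.1, q.2)) = μ.withDensity g := by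
  refine Measure.ext_of_lintegral _ fun h hh => ?_
  have hfiber (y : Y) : ∫⁻ t, f (t, y) * h (σ y t, y) ∂ν = ∫⁻ t, g (t, y) * h (t, y) ∂ν := by
    have hσy : Measurable (σ y) := measurable_fst.comp (hσ.comp measurable_prodMk_right)
    have hhy : Measurable fun t => h (t, y) := hh.comp measurable_prodMk_right
    calc ∫⁻ t, f (t, y) * h (σ y t, y) ∂ν
        = ∫⁻ t, h (σ y t, y) ∂ν.withDensity fun t => f (t, y) :=
          (lintegral_withDensity_eq_lintegral_mul _ (hf.comp measurable_prodMk_right)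
            (hhy.comp hσy)).symm
      _ = ∫⁻ t, h (t, y) ∂ν.withDensity fun t => g (t, y) := by
          rw [← hfib, lintegral_map hhy hσy]
      _ = ∫⁻ t, g (t, y) * h (t, y) ∂ν :=
          lintegral_withDensity_eq_lintegral_mul _ (hg.comp measurable_prodMk_right) hhy
  calc ∫⁻ q, h q ∂(μ.withDensity f).map (fun q => (σ q.2 q.1, q.2))
      = ∫⁻ q, f q * h (σ q.2 q.1, q.2) ∂μ := by
        rw [lintegral_map hh hσ]
        exact lintegral_withDensity_eq_lintegral_mul _ hf (hh.comp hσ)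
    _ = ∫⁻ q, ∫⁻ t, g (t, q.2) * h (t, q.2) ∂ν ∂μ :=
        (lintegral_eq_lintegral_lintegral_of_map_add_eq (ν := ν) hinv
          (g := fun q => f q * h (σ q.2 q.1, q.2)) (hf.mul (hh.comp hσ))).trans
          (lintegral_congr fun q => hfiber q.2)
    _ = ∫⁻ q, h q ∂μ.withDensity g := by
        rw [lintegral_withDensity_eq_lintegral_mul _ hg hh]
        exact (lintegral_eq_lintegral_lintegral_of_map_add_eq hinv (hg.mul hh)).symm

end FiberAverage

section Circle

variable {p : ℝ} [hp : Fact (0 < p)]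

lemma AddCircle.measurable_liftIoc {B : Type*} [MeasurableSpace B] {f : ℝ → B}
    (hf : Measurable f) (a : ℝ) : Measurable (AddCircle.liftIoc p a f) :=
  hf.comp (measurable_subtype_coe.comp (AddCircle.measurableEquivIoc p a).measurable)

noncomputable def circleCDF (ρ : AddCircle p → ℝ) : AddCircle p → AddCircle p :=
  AddCircle.liftIoc p 0 fun y => ((∫ u in (0 : ℝ)..y, ρ u : ℝ) : AddCircle p)

lemma intervalIntegrable_comp_coe {ρ : AddCircle p → ℝ}
    (hρ : Integrable ρ AddCircle.haarAddCircle) (a b : ℝ) :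
    IntervalIntegrable (fun u : ℝ => ρ u) volume a b := by
  refine Function.Periodic.intervalIntegrable₀ (fun u => by simp) hp.out.ne' ?_ a b
  have hmk := AddCircle.measurePreserving_mk p 0
  rw [zero_add] at hmk
  have hρvol : Integrable ρ volume := by
    rw [AddCircle.volume_eq_smul_haarAddCircle]
    exact hρ.smul_measure ENNReal.ofReal_ne_top
  rw [intervalIntegrable_iff_integrableOn_Ioc_of_le hp.out.le, IntegrableOn]
  exact (hmk.integrable_comp hρvol.aestronglyMeasurable).2 hρvol

lemma intervalIntegral_comp_coe (ρ : AddCircle p → ℝ) :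
    ∫ u in (0 : ℝ)..p, ρ u = p * ∫ θ, ρ θ ∂AddCircle.haarAddCircle := by
  have h := AddCircle.intervalIntegral_preimage p 0 ρ
  rw [zero_add] at h
  rw [h, AddCircle.volume_eq_smul_haarAddCircle, integral_smul_measure,
    ENNReal.toReal_ofReal hp.out.le, smul_eq_mul]

lemma lintegral_ofReal_mul_comp_circleCDF {ρ : AddCircle p → ℝ} (hρm : Measurable ρ)
    (h0 : ∀ θ, 0 ≤ ρ θ) (hρ : Integrable ρ AddCircle.haarAddCircle)
    (htot : ∫ θ, ρ θ ∂AddCircle.haarAddCircle = 1) {h : AddCircle p → ℝ≥0∞} (hh : Measurable h) :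
    ∫⁻ θ, ENNReal.ofReal (ρ θ) * h (circleCDF ρ θ) = ∫⁻ θ, h θ := by
  set F : ℝ → ℝ := fun y => ∫ u in (0 : ℝ)..y, ρ u
  have hF : Continuous F := intervalIntegral.continuous_primitive (intervalIntegrable_comp_coe hρ) 0
  have hmapF := map_primitive_withDensity_restrict_Ioc hp.out (intervalIntegrable_comp_coe hρ)
    (fun u => h0 u) (by rw [intervalIntegral_comp_coe, htot, mul_one])
  have hpre (g : AddCircle p → ℝ≥0∞) : ∫⁻ y in Ioc 0 p, g y = ∫⁻ θ, g θ := by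
    simpa only [zero_add] using AddCircle.lintegral_preimage p 0 g
  rw [← hpre, ← hpre, setLIntegral_congr_fun measurableSet_Ioc fun y hy => by
    rw [circleCDF, AddCircle.liftIoc_coe_apply (by rwa [zero_add])]]
  calc ∫⁻ y in Ioc 0 p, ENNReal.ofReal (ρ y) * h (F y)
      = ∫⁻ y, h (F y) ∂(volume.restrict (Ioc 0 p)).withDensity
          fun u => ENNReal.ofReal (ρ u) :=
        (lintegral_withDensity_eq_lintegral_mul _
          (hρm.comp AddCircle.measurable_mk').ennreal_ofReal
          (hh.comp (AddCircle.measurable_mk'.comp hF.measurable))).symm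
    _ = ∫⁻ y in Ioc 0 p, h y := by
        rw [← lintegral_map (f := fun v : ℝ => h v) (hh.comp AddCircle.measurable_mk')
          hF.measurable, hmapF]

lemma map_circleCDF_withDensity {ρ : AddCircle p → ℝ} (hρm : Measurable ρ) (h0 : ∀ θ, 0 ≤ ρ θ)
    (hρ : Integrable ρ AddCircle.haarAddCircle) (htot : ∫ θ, ρ θ ∂AddCircle.haarAddCircle = 1) :
    (AddCircle.haarAddCircle.withDensity fun θ => ENNReal.ofReal (ρ θ)).map (circleCDF ρ) =
      AddCircle.haarAddCircle := by
  have hΦ : Measurable (circleCDF ρ) := AddCircle.measurable_liftIoc (AddCircle.measurable_mk'.comp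
    (intervalIntegral.continuous_primitive (intervalIntegrable_comp_coe hρ) 0).measurable) 0
  have hsmul (g : AddCircle p → ℝ≥0∞) :
      ∫⁻ θ, g θ = ENNReal.ofReal p * ∫⁻ θ, g θ ∂AddCircle.haarAddCircle := by
    rw [AddCircle.volume_eq_smul_haarAddCircle, lintegral_smul_measure, smul_eq_mul]
  refine Measure.ext_of_lintegral _ fun h hh => ?_
  rw [lintegral_map hh hΦ, lintegral_withDensity_eq_lintegral_mul _ hρm.ennreal_ofReal
    (g := fun θ => h (circleCDF ρ θ)) (hh.comp hΦ),
    ← ENNReal.mul_right_inj (ENNReal.ofReal_ne_zero_iff.2 hp.out) ENNReal.ofReal_ne_top,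
    ← hsmul, ← hsmul]
  exact lintegral_ofReal_mul_comp_circleCDF hρm h0 hρ htot hh

lemma dist_circleCDF_le {ρ : AddCircle p → ℝ} (hρ : Integrable ρ AddCircle.haarAddCircle)
    {κ : ℝ} (hκ : ∀ θ, |ρ θ - 1| ≤ κ) (htot : ∫ θ, ρ θ ∂AddCircle.haarAddCircle = 1)
    (θ : AddCircle p) : dist (circleCDF ρ θ) θ ≤ κ * (p / 2) := by
  obtain ⟨y, hy, rfl⟩ : ∃ y ∈ Ioc 0 (0 + p), (y : AddCircle p) = θ :=
    ⟨_, (AddCircle.equivIoc p 0 θ).2, (AddCircle.equivIoc p 0).symm_apply_apply θ⟩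
  rw [circleCDF, AddCircle.liftIoc_coe_apply hy, dist_eq_norm, ← AddCircle.coe_sub]
  rw [zero_add] at hy
  refine QuotientAddGroup.norm_mk_le_norm.trans ?_
  exact abs_primitive_sub_self_le (intervalIntegrable_comp_coe hρ) (fun u => hκ u)
    (by rw [intervalIntegral_comp_coe, htot, mul_one]) (Ioc_subset_Icc_self hy)

lemma half_period_le_diam_addCircle : p / 2 ≤ Metric.diam (univ : Set (AddCircle p)) :=
  calc p / 2 = dist ((p / 2 : ℝ) : AddCircle p) 0 := by
        rw [dist_zero_right, AddCircle.norm_half_period_eq, abs_of_pos hp.out]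
    _ ≤ _ := Metric.dist_le_diam_of_mem isCompact_univ.isBounded trivial trivial

lemma map_circleCDF_div_withDensity {f : AddCircle p → ℝ} (hfm : Measurable f)
    (h0 : ∀ θ, 0 ≤ f θ) (hf : Integrable f AddCircle.haarAddCircle)
    (hpos : 0 < ∫ θ, f θ ∂AddCircle.haarAddCircle) :
    (AddCircle.haarAddCircle.withDensity fun θ => ENNReal.ofReal (f θ)).map
        (circleCDF fun θ => f θ / ∫ θ, f θ ∂AddCircle.haarAddCircle) =
      AddCircle.haarAddCircle.withDensity fun _ =>
        ENNReal.ofReal (∫ θ, f θ ∂AddCircle.haarAddCircle) := by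
  set c := ∫ θ, f θ ∂AddCircle.haarAddCircle
  have hdens : (fun θ => ENNReal.ofReal (f θ)) =
      ENNReal.ofReal c • fun θ => ENNReal.ofReal (f θ / c) := by
    ext θ
    rw [Pi.smul_apply, smul_eq_mul, ← ENNReal.ofReal_mul hpos.le, mul_div_cancel₀ _ hpos.ne']
  rw [hdens, withDensity_smul _ (hfm.div_const c).ennreal_ofReal, Measure.map_smul,
    map_circleCDF_withDensity (hfm.div_const c) (fun θ => div_nonneg (h0 θ) hpos.le)
      (hf.div_const c) (by rw [integral_div, div_self hpos.ne']), withDensity_const]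

lemma measurable_circleCDF_prodMk {Y : Type*} [MeasurableSpace Y] {ρ : AddCircle p × Y → ℝ}
    (hρ : Measurable ρ) (hint : ∀ y, Integrable (fun t => ρ (t, y)) AddCircle.haarAddCircle) :
    Measurable fun q : AddCircle p × Y => (circleCDF (fun t => ρ (t, q.2)) q.1, q.2) := by
  set P : ℝ → Y → ℝ := fun v y => ∫ u in (0 : ℝ)..v, ρ (u, y)
  have hρcoe : Measurable fun z : Y × ℝ => ρ (z.2, z.1) :=
    hρ.comp ((AddCircle.measurable_mk'.comp measurable_snd).prodMk measurable_fst)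
  have hP : Measurable (Function.uncurry P) :=
    measurable_uncurry_of_continuous_of_measurable
      (fun y => intervalIntegral.continuous_primitive (intervalIntegrable_comp_coe (hint y)) 0)
      fun v => (hρcoe.stronglyMeasurable.integral_prod_right'.measurable).sub
        hρcoe.stronglyMeasurable.integral_prod_right'.measurable
  have he : Measurable fun θ : AddCircle p => (AddCircle.equivIoc p 0 θ : ℝ) :=
    measurable_subtype_coe.comp (AddCircle.measurableEquivIoc p 0).measurable
  exact (AddCircle.measurable_mk'.comp (hP.comp ((he.comp measurable_fst).prodMk
    measurable_snd))).prodMk measurable_snd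

lemma measurable_circleCDF_div_prodMk {Y : Type*} [MeasurableSpace Y]
    {φ : AddCircle p × Y → ℝ} (hφ : Measurable φ)
    (hint : ∀ y, Integrable (fun t => φ (t, y)) AddCircle.haarAddCircle) :
    Measurable fun q : AddCircle p × Y =>
      (circleCDF (fun t => φ (t, q.2) / ∫ s, φ (s, q.2) ∂AddCircle.haarAddCircle) q.1, q.2) :=
  measurable_circleCDF_prodMk (ρ := fun q => φ q / ∫ s, φ (s, q.2) ∂AddCircle.haarAddCircle)
    (hφ.div ((hφ.comp measurable_swap).stronglyMeasurable.integral_prod_right'.measurable.comp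
      measurable_snd))
    fun y => (hint y).div_const (∫ s, φ (s, y) ∂AddCircle.haarAddCircle)

lemma dist_circleCDF_div_le {f : AddCircle p → ℝ} (hf : Integrable f AddCircle.haarAddCircle)
    (hpos : 0 < ∫ θ, f θ ∂AddCircle.haarAddCircle) {κ : ℝ}
    (hlow : ∀ θ, (1 - κ) * ∫ θ, f θ ∂AddCircle.haarAddCircle ≤ f θ)
    (hhigh : ∀ θ, f θ ≤ (1 + κ) * ∫ θ, f θ ∂AddCircle.haarAddCircle) (θ : AddCircle p) :
    dist (circleCDF (fun θ => f θ / ∫ θ, f θ ∂AddCircle.haarAddCircle) θ) θ ≤ κ * (p / 2) := by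
  refine dist_circleCDF_le (hf.div_const _) (fun θ => ?_)
    (by rw [integral_div, div_self hpos.ne']) θ
  rw [abs_sub_le_iff, sub_le_iff_le_add, sub_le_comm, div_le_iff₀ hpos, le_div_iff₀ hpos]
  constructor <;> linarith [hlow θ, hhigh θ]

lemma map_withDensity_circleCDF_fiberwise {Y : Type*} [MeasurableSpace Y]
    {μ : Measure (AddCircle p × Y)} [SFinite μ]
    (hinv : ∀ t : AddCircle p, μ.map (fun q => (t + q.1, q.2)) = μ) {φ : AddCircle p × Y → ℝ}
    (hφ : Measurable φ) (h0 : ∀ q, 0 ≤ φ q)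
    (hint : ∀ y, Integrable (fun t => φ (t, y)) AddCircle.haarAddCircle)
    (hpos : ∀ y, 0 < ∫ t, φ (t, y) ∂AddCircle.haarAddCircle) :
    (μ.withDensity fun q => ENNReal.ofReal (φ q)).map
        (fun q => (circleCDF (fun t => φ (t, q.2) / ∫ s, φ (s, q.2) ∂AddCircle.haarAddCircle)
          q.1, q.2)) =
      μ.withDensity fun q =>
        ENNReal.ofReal (∫ t, φ (q.1 + t, q.2) ∂AddCircle.haarAddCircle) := by
  have hbar (θ : AddCircle p) (y : Y) :
      ∫ t, φ (θ + t, y) ∂AddCircle.haarAddCircle = ∫ t, φ (t, y) ∂AddCircle.haarAddCircle :=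
    integral_add_left_eq_self (fun t => φ (t, y)) θ
  have hc : Measurable fun y => ∫ t, φ (t, y) ∂AddCircle.haarAddCircle :=
    (hφ.comp measurable_swap).stronglyMeasurable.integral_prod_right'.measurable
  simp only [hbar]
  exact map_withDensity_eq_of_fiberwise hinv (measurable_circleCDF_div_prodMk hφ hint)
    hφ.ennreal_ofReal (hc.comp measurable_snd).ennreal_ofReal fun y =>
      map_circleCDF_div_withDensity (f := fun t => φ (t, y)) (hφ.comp measurable_prodMk_right)
        (fun t => h0 (t, y)) (hint y) (hpos y)

end Circle

theorem stmt7_general {p : ℝ} [hp : Fact (0 < p)] {X₀ : Type*} [MetricSpace X₀]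
    [MeasurableSpace X₀]
    (μ : Measure (AddCircle p × X₀)) [IsFiniteMeasure μ]
    (hinv : ∀ t : AddCircle p,
      Measure.map (fun q : AddCircle p × X₀ => (t + q.1, q.2)) μ = μ)
    (φ : AddCircle p × X₀ → ℝ) (hmeas : Measurable φ)
    (hpos : ∀ q, 0 < φ q)
    {κ : ℝ} (hκ : 0 ≤ κ)
    (hlow : ∀ q : AddCircle p × X₀,
      (1 - κ) * (∫ t, φ (q.1 + t, q.2) ∂(AddCircle.haarAddCircle)) ≤ φ q)
    (hhigh : ∀ q : AddCircle p × X₀,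
      φ q ≤ (1 + κ) * (∫ t, φ (q.1 + t, q.2) ∂(AddCircle.haarAddCircle))) :
    levyDistD (fun a b : AddCircle p × X₀ => dist a.1 b.1 + dist a.2 b.2)
      (μ.withDensity fun q => ENNReal.ofReal (φ q))
      (μ.withDensity fun q =>
        ENNReal.ofReal (∫ t, φ (q.1 + t, q.2) ∂(AddCircle.haarAddCircle)))
      ≤ κ * Metric.diam (Set.univ : Set (AddCircle p)) := by
  have hbar (θ : AddCircle p) (x : X₀) :
      ∫ t, φ (θ + t, x) ∂AddCircle.haarAddCircle = ∫ t, φ (t, x) ∂AddCircle.haarAddCircle :=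
    integral_add_left_eq_self (fun t => φ (t, x)) θ
  have hc (x : X₀) : 0 < ∫ t, φ (t, x) ∂AddCircle.haarAddCircle :=
    pos_of_mul_pos_right (hbar 0 x ▸ (hpos (0, x)).trans_le (hhigh (0, x))) (by linarith)
  -- a non-integrable fibre would have average `0` (the junk value), contradicting `hc`
  have hint (x : X₀) : Integrable (fun t => φ (t, x)) AddCircle.haarAddCircle :=
    by_contra fun h => (hc x).ne' (integral_undef h)
  calc _ ≤ κ * (p / 2) :=
        levyDistD_le_of_map_eq (measurable_circleCDF_div_prodMk hmeas hint).aemeasurable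
          (map_withDensity_circleCDF_fiberwise hinv hmeas (fun q => (hpos q).le) hint hc)
          (mul_nonneg hκ (half_pos hp.out).le) fun q => by
        simpa using dist_circleCDF_div_le (hint q.2) (hc q.2)
          (fun θ => by simpa only [hbar] using hlow (θ, q.2))
          (fun θ => by simpa only [hbar] using hhigh (θ, q.2)) q.1
    _ ≤ _ := mul_le_mul_of_nonneg_left half_period_le_diam_addCircle hκ

/-- Corollary 18.0.8: on `X = T × X₀` (`T = ℝ/pℤ`) with the ℓ¹ product metric
and a `T`-invariant finite Borel measure `μ`, if `φ` is a bounded positive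
Borel function whose `T`-average is `φ̄` and `(1−κ)·φ̄ ≤ φ ≤ (1+κ)·φ̄`, then
`d_L(φ·μ, φ̄·μ) ≤ κ · diam T`. -/
theorem stmt7 {p : ℝ} [hp : Fact (0 < p)] {X₀ : Type*} [MetricSpace X₀]
    [MeasurableSpace X₀] [BorelSpace X₀]
    (μ : Measure (AddCircle p × X₀)) [IsFiniteMeasure μ]
    (hinv : ∀ t : AddCircle p,
      Measure.map (fun q : AddCircle p × X₀ => (t + q.1, q.2)) μ = μ)
    (φ : AddCircle p × X₀ → ℝ) (hmeas : Measurable φ)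
    (hbdd : ∃ C : ℝ, ∀ q, φ q ≤ C) (hpos : ∀ q, 0 < φ q)
    {κ : ℝ} (hκ : 0 ≤ κ)
    (hlow : ∀ q : AddCircle p × X₀,
      (1 - κ) * (∫ t, φ (q.1 + t, q.2) ∂(AddCircle.haarAddCircle)) ≤ φ q)
    (hhigh : ∀ q : AddCircle p × X₀,
      φ q ≤ (1 + κ) * (∫ t, φ (q.1 + t, q.2) ∂(AddCircle.haarAddCircle))) :
    levyDistD (fun a b : AddCircle p × X₀ => dist a.1 b.1 + dist a.2 b.2)
      (μ.withDensity fun q => ENNReal.ofReal (φ q))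
      (μ.withDensity fun q =>
        ENNReal.ofReal (∫ t, φ (q.1 + t, q.2) ∂(AddCircle.haarAddCircle)))
      ≤ κ * Metric.diam (Set.univ : Set (AddCircle p)) :=
  stmt7_general (hp := hp) μ hinv φ hmeas hpos hκ hlow hhigh
end

section
/- Let Y be a compact metric space equipped with a finite Borel measure μ with μ(Y) > 0, let Z be a metric space, and let f, g : Y → Z be Lipschitz maps. Let β > 0 and assume d_L(f_*μ, g_*μ) ≤ β. Then there exists a nonempty finite set Ỹ, a map p : Ỹ → Y, and a bijection φ : Ỹ → Ỹ such that dist(f(p(ỹ)), g(p(φ(ỹ)))) ≤ 2β for every ỹ ∈ Ỹ. -/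
/-!
A set of positive measure `S ⊆ Y` is carried by the Lévy bound into the set of points `y` with
`dist (f x) (g y) < ε` for some `x ∈ S`, which again has measure at least `μ S`. Iterating from
`S = Y`, chains `c₀, c₁, …, c_N` with `dist (f cⱼ) (g cⱼ₊₁) < ε` exist for every length `N`. By
compactness, a long chain returns close to itself: `c_a` and `c_b` are close for some `a < b`,
and `g` is uniformly continuous, so replacing the last link `c_b` by `c_a` closes the segment
`c_a, …, c_{b-1}` into a cycle at the cost of the slack `2β - ε`.
-/

open MeasureTheory

open Metric Set

section Levy

variable {X : Type*} [PseudoMetricSpace X] [MeasurableSpace X]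

def levyAdmissible (μ ν : Measure X) : Set ℝ :=
  {ε : ℝ | 0 < ε ∧ ∀ A : Set X, μ A ≤ ν (thickening ε A)}

theorem exists_mem_levyAdmissible_lt {μ ν : Measure X} (hne : (levyAdmissible μ ν).Nonempty)
    {γ : ℝ} (h : levyDist μ ν < γ) : ∃ ε ∈ levyAdmissible μ ν, ε < γ :=
  exists_lt_of_csInf_lt hne h

variable [OpensMeasurableSpace X] {Y : Type*} [MeasurableSpace Y] {μ : Measure Y} {f g : Y → X}

/-- A radius exceeding the diameter of `range f ∪ range g` is admissible: a set meeting
`range f` is then thickened to a superset of `range g`, and any other set is `f_*μ`-null. -/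
theorem levyAdmissible_map_nonempty (hf : Measurable f) (hg : Measurable g)
    (hrf : MeasurableSet (range f)) (hb : Bornology.IsBounded (range f ∪ range g)) :
    (levyAdmissible (μ.map f) (μ.map g)).Nonempty := by
  obtain ⟨C, hC⟩ := isBounded_iff.mp hb
  refine ⟨max C 0 + 1, by positivity, fun A => ?_⟩
  by_cases hA : (A ∩ range f).Nonempty
  · obtain ⟨z, hzA, hzf⟩ := hA
    have hcover : g ⁻¹' thickening (max C 0 + 1) A = univ := by
      refine eq_univ_of_forall fun y => mem_thickening_iff.mpr ⟨z, hzA, ?_⟩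
      have := hC (mem_union_right _ (mem_range_self y)) (mem_union_left _ hzf)
      linarith [le_max_left C 0]
    rw [Measure.map_apply hg isOpen_thickening.measurableSet, hcover,
      ← preimage_univ (f := f), ← Measure.map_apply hf MeasurableSet.univ]
    exact measure_mono (subset_univ A)
  · have hAf : A ⊆ (range f)ᶜ := fun z hz hzf => hA ⟨z, hz, hzf⟩
    have hnull : μ.map f (range f)ᶜ = 0 := by
      rw [Measure.map_apply hf hrf.compl, preimage_compl, preimage_range, compl_univ,
        measure_empty]
    simp [measure_mono_null hAf hnull]

theorem measure_le_preimage_thickening_image {ε : ℝ}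
    (hε : ε ∈ levyAdmissible (μ.map f) (μ.map g)) (hf : AEMeasurable f μ) (hg : Measurable g)
    (S : Set Y) : μ S ≤ μ (g ⁻¹' thickening ε (f '' S)) :=
  calc μ S ≤ μ.map f (f '' S) := Measure.le_map_apply_image hf S
    _ ≤ μ.map g (thickening ε (f '' S)) := hε.2 _
    _ = μ (g ⁻¹' thickening ε (f '' S)) :=
      Measure.map_apply hg isOpen_thickening.measurableSet

end Levy

section Chains

variable {Y : Type*}

def chainEnds (R : Y → Y → Prop) (n : ℕ) : Set Y :=
  {y | ∃ c : ℕ → Y, c n = y ∧ ∀ j < n, R (c j) (c (j + 1))}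

theorem chainEnds_zero (R : Y → Y → Prop) : chainEnds R 0 = univ :=
  eq_univ_of_forall fun y => ⟨fun _ => y, rfl, fun _ hj => absurd hj (Nat.not_lt_zero _)⟩

theorem mem_chainEnds_succ {R : Y → Y → Prop} {n : ℕ} {x y : Y} (hx : x ∈ chainEnds R n)
    (hxy : R x y) : y ∈ chainEnds R (n + 1) := by
  obtain ⟨c, rfl, hc⟩ := hx
  refine ⟨Function.update c (n + 1) y, Function.update_self _ _ _, fun j hj => ?_⟩
  rw [Function.update_of_ne (by omega)]
  rcases Nat.lt_succ_iff_lt_or_eq.mp hj with hj | rfl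
  · rw [Function.update_of_ne (by omega)]
    exact hc j hj
  · rwa [Function.update_self]

variable [MeasurableSpace Y] {X : Type*} [PseudoMetricSpace X] [MeasurableSpace X]
  [OpensMeasurableSpace X]

theorem measure_univ_le_chainEnds {μ : Measure Y} {f g : Y → X} {ε : ℝ}
    (hε : ε ∈ levyAdmissible (μ.map f) (μ.map g)) (hf : AEMeasurable f μ) (hg : Measurable g)
    (n : ℕ) : μ univ ≤ μ (chainEnds (fun x y => dist (f x) (g y) < ε) n) := by
  induction n with
  | zero => rw [chainEnds_zero]
  | succ n ih =>
    refine ih.trans <| (measure_le_preimage_thickening_image hε hf hg _).trans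
      (measure_mono fun y hy => ?_)
    obtain ⟨_, ⟨x, hx, rfl⟩, hdist⟩ := mem_thickening_iff.mp hy
    exact mem_chainEnds_succ hx (by rwa [dist_comm])

end Chains

theorem exists_lt_dist_lt_of_totallyBounded {X : Type*} [PseudoMetricSpace X]
    (hX : TotallyBounded (univ : Set X)) {r : ℝ} (hr : 0 < r) :
    ∃ N : ℕ, ∀ c : ℕ → X, ∃ a b, a < b ∧ b ≤ N ∧ dist (c a) (c b) < r := by
  classical
  obtain ⟨t, ht, hcover⟩ := totallyBounded_iff.mp hX (r / 2) (half_pos hr)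
  refine ⟨ht.toFinset.card, fun c => ?_⟩
  have hcenter : ∀ k, ∃ x ∈ t, c k ∈ ball x (r / 2) := fun k => by
    simpa using hcover (mem_univ (c k))
  choose σ hσt hσball using hcenter
  obtain ⟨i, hi, j, hj, hij, hσ⟩ := Finset.exists_ne_map_eq_of_card_lt_of_maps_to
    (s := Finset.range (ht.toFinset.card + 1)) (by simp)
    (fun k _ => ht.mem_toFinset.mpr (hσt k))
  have hdist : dist (c i) (c j) < r := by
    have hi := hσball i
    have hj := hσball j
    rw [mem_ball] at hi hj
    rw [hσ] at hi
    linarith [dist_triangle_right (c i) (c j) (σ j)]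
  simp only [Finset.mem_range] at hi hj
  rcases hij.lt_or_gt with h | h
  · exact ⟨i, j, h, by omega, hdist⟩
  · exact ⟨j, i, h, by omega, by rwa [dist_comm]⟩

theorem exists_perm_of_chain_of_closing {Y : Type*} {R : Y → Y → Prop} {c : ℕ → Y} {n : ℕ}
    (hchain : ∀ j < n, R (c j) (c (j + 1))) (hclose : R (c n) (c 0)) :
    ∃ m : ℕ, 0 < m ∧ ∃ (p : Fin m → Y) (φ : Equiv.Perm (Fin m)), ∀ i, R (p i) (p (φ i)) := by
  refine ⟨n + 1, n.succ_pos, fun k => c k, finRotate (n + 1), fun i => ?_⟩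
  by_cases hi : i = Fin.last n
  · subst hi
    simpa [finRotate_last] using hclose
  · have := hchain i (Fin.val_lt_last hi)
    rwa [← coe_finRotate_of_ne_last hi] at this

theorem stmt9_general {Y Z : Type*} [MetricSpace Y] [CompactSpace Y]
    [MeasurableSpace Y] [BorelSpace Y]
    [MetricSpace Z] [MeasurableSpace Z] [BorelSpace Z]
    (μ : Measure Y) (hμ : 0 < μ Set.univ)
    (f g : Y → Z) {Kf Kg : NNReal} (hf : LipschitzWith Kf f) (hg : LipschitzWith Kg g)
    {β : ℝ} (hβ : 0 < β) (hd : levyDist (μ.map f) (μ.map g) ≤ β) :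
    ∃ m : ℕ, 0 < m ∧ ∃ (p : Fin m → Y) (φ : Equiv.Perm (Fin m)),
      ∀ i, dist (f (p i)) (g (p (φ i))) ≤ 2 * β := by
  have hfc := hf.continuous
  have hgc := hg.continuous
  have hne := levyAdmissible_map_nonempty (μ := μ) hfc.measurable hgc.measurable
    (isCompact_range hfc).isClosed.measurableSet
    ((isCompact_range hfc).union (isCompact_range hgc)).isBounded
  obtain ⟨ε, hε, hε2β⟩ := exists_mem_levyAdmissible_lt hne
    (hd.trans_lt (by linarith : β < 2 * β))
  obtain ⟨r, hr, hgr⟩ := Metric.uniformContinuous_iff.mp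
    (CompactSpace.uniformContinuous_of_continuous hgc) (2 * β - ε) (by linarith)
  obtain ⟨N, hN⟩ :=
    exists_lt_dist_lt_of_totallyBounded (isCompact_univ (X := Y)).totallyBounded hr
  have hpos : 0 < μ (chainEnds (fun x y => dist (f x) (g y) < ε) N) :=
    hμ.trans_le (measure_univ_le_chainEnds hε hfc.aemeasurable hgc.measurable N)
  obtain ⟨_, c, rfl, hc⟩ := nonempty_of_measure_ne_zero hpos.ne'
  obtain ⟨a, b, hab, hbN, hcab⟩ := hN c
  obtain ⟨n, rfl⟩ : ∃ n, b = a + n + 1 := ⟨b - a - 1, by omega⟩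
  refine exists_perm_of_chain_of_closing (R := fun x y => dist (f x) (g y) ≤ 2 * β)
    (c := fun k => c (a + k)) (n := n) (fun j hj => ?_) ?_
  · exact (hc (a + j) (by omega)).le.trans (by linarith)
  · calc dist (f (c (a + n))) (g (c (a + 0)))
        ≤ dist (f (c (a + n))) (g (c (a + n + 1))) + dist (g (c (a + n + 1))) (g (c a)) :=
          dist_triangle _ _ _
      _ ≤ 2 * β := by
          linarith [hc (a + n) (by omega), hgr (dist_comm (c a) _ ▸ hcab)]

/-- Measured Marriage Theorem 14.2.2 (first part): given Lipschitz maps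
`f, g : Y → Z` with `d_L(f_*μ, g_*μ) ≤ β`, there is a nonempty finite set `Ỹ`
(realized as `Fin m`, `m > 0`), a map `p : Ỹ → Y` and a bijection `φ` of `Ỹ`
with `dist (f (p ỹ)) (g (p (φ ỹ))) ≤ 2β` for all `ỹ`. -/
theorem stmt9 {Y Z : Type*} [MetricSpace Y] [CompactSpace Y]
    [MeasurableSpace Y] [BorelSpace Y]
    [MetricSpace Z] [MeasurableSpace Z] [BorelSpace Z]
    (μ : Measure Y) [IsFiniteMeasure μ] (hμ : 0 < μ Set.univ)
    (f g : Y → Z) {Kf Kg : NNReal} (hf : LipschitzWith Kf f) (hg : LipschitzWith Kg g)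
    {β : ℝ} (hβ : 0 < β) (hd : levyDist (μ.map f) (μ.map g) ≤ β) :
    ∃ m : ℕ, 0 < m ∧ ∃ (p : Fin m → Y) (φ : Equiv.Perm (Fin m)),
      ∀ i, dist (f (p i)) (g (p (φ i))) ≤ 2 * β :=
  stmt9_general μ hμ f g hf hg hβ hd
end

section
/- Let Y be a compact metric space equipped with a finite Borel measure μ with μ(Y) > 0, let Z be a metric space, and let f, g : Y → Z be Lipschitz maps with β > 0 and d_L(f_*μ, g_*μ) ≤ β. Suppose in addition that σ : Y → Y is a measure-preserving isometry with σ∘σ∘σ = id acting freely (σ(y) ≠ y and σ(σ(y)) ≠ y for all y). Then there exist a nonempty finite set Ỹ, a map p : Ỹ → Y, a bijection φ : Ỹ → Ỹ, and a bijection σ̃ : Ỹ → Ỹ with σ̃∘σ̃∘σ̃ = id, such that p∘σ̃ = σ∘p and dist(f(p(ỹ)), g(p(φ(ỹ)))) ≤ 2β for every ỹ ∈ Ỹ. -/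
/-!
Take `ε < 2β` in the set defining `d_L` and cut `Y` into finitely many measurable pieces, so
small that the Lipschitz errors stay below `2β - ε` and that `x`, `σ x`, `σ² x` always lie in
different pieces. Colouring a point by the least piece on its orbit, together with the number of
`σ`-steps from the point lying in that piece, gives pieces that `σ` permutes cyclically, hence of
equal measure along orbits, with equivariantly chosen representatives. The Lévy bound is Hall's
condition for the measures of the pieces and the relation "representatives `f`/`g`-close within
`2β`". Simultaneous Dirichlet approximation turns the measures into integer multiplicities, still
constant along orbits and still satisfying Hall's condition; Hall's marriage theorem on the
resulting multiset of pieces gives `φ`, and `σ̃` moves each copy to the next piece of its orbit.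
-/

open MeasureTheory

section Hall

open Finset

theorem exists_abs_nat_mul_sub_round_lt {ι : Type*} [Fintype ι] (w : ι → ℝ) {δ : ℝ}
    (hδ : 0 < δ) : ∃ N : ℕ, 0 < N ∧ ∀ i, |N * w i - round (N * w i)| < δ := by
  classical
  obtain ⟨Q, hQ⟩ := exists_nat_gt δ⁻¹
  have hQ0 : (0 : ℝ) < Q := (inv_pos.2 hδ).trans hQ
  -- two multiples `a < b` whose fractional parts lie in the same boxes of width `1 / Q`
  let box : ℕ → ι → ℤ := fun N i => ⌊Int.fract (N * w i) * Q⌋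
  have hbox : ∀ N, box N ∈ Fintype.piFinset fun _ => Ico (0 : ℤ) Q := fun N => by
    simp only [Fintype.mem_piFinset, mem_Ico, box]
    intro i
    refine ⟨Int.floor_nonneg.2 (by positivity), Int.floor_lt.2 ?_⟩
    simpa using mul_lt_of_lt_one_left hQ0 (Int.fract_lt_one _)
  obtain ⟨a, -, b, -, hab, habox⟩ := exists_ne_map_eq_of_card_lt_of_maps_to
    (s := range (Q ^ Fintype.card ι + 1)) (by simp) fun N _ => hbox N
  wlog hlt : a < b generalizing a b
  · exact this b a hab.symm habox.symm (hab.lt_or_gt.resolve_left hlt)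
  refine ⟨b - a, Nat.sub_pos_of_lt hlt, fun i => ?_⟩
  have hfract : |Int.fract (b * w i) - Int.fract (a * w i)| < δ := by
    have h := Int.abs_sub_lt_one_of_floor_eq_floor (congrFun habox i).symm
    rw [← sub_mul, abs_mul, abs_of_pos hQ0, ← lt_div_iff₀ hQ0] at h
    exact h.trans ((div_lt_iff₀ hQ0).2 (by rwa [inv_lt_iff_one_lt_mul₀ hδ, mul_comm] at hQ))
  calc |((b - a : ℕ) : ℝ) * w i - round (((b - a : ℕ) : ℝ) * w i)|
      ≤ |((b - a : ℕ) : ℝ) * w i - ((⌊b * w i⌋ - ⌊a * w i⌋ : ℤ) : ℝ)| := round_le _ _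
    _ = |Int.fract (b * w i) - Int.fract (a * w i)| := by
      rw [Nat.cast_sub hlt.le, Int.fract, Int.fract]; push_cast; ring_nf
    _ < δ := hfract

theorem abs_sum_toNat_round_sub_le {κ : Type*} [Fintype κ] {w : κ → ℝ} (hw : ∀ J, 0 ≤ w J)
    {N : ℕ} {δ : ℝ} (hround : ∀ J, |N * w J - round (N * w J)| < δ) (S : Finset κ) :
    |∑ J ∈ S, ((round (N * w J)).toNat : ℝ) - N * ∑ J ∈ S, w J| ≤ #S * δ := by
  have hcast : ∀ J, ((round (N * w J)).toNat : ℝ) = round (N * w J) := fun J => by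
    have : 0 ≤ round ((N : ℝ) * w J) := by
      rw [round_eq]; exact Int.floor_nonneg.2 (by have := hw J; positivity)
    exact_mod_cast Int.toNat_of_nonneg this
  calc _ = |∑ J ∈ S, ((round (N * w J) : ℝ) - N * w J)| := by
        simp only [hcast, sum_sub_distrib, mul_sum]
    _ ≤ ∑ J ∈ S, |(round (N * w J) : ℝ) - N * w J| := abs_sum_le_sum_abs _ _
    _ ≤ ∑ J ∈ S, δ := sum_le_sum fun J _ => by rw [abs_sub_comm]; exact (hround J).le
    _ = #S * δ := by rw [sum_const, nsmul_eq_mul]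

theorem exists_nat_hall_of_real_hall {κ : Type*} [Fintype κ] (w : κ → ℝ) (hw : ∀ J, 0 ≤ w J)
    (hpos : 0 < ∑ J, w J) (T : Finset κ → Finset κ)
    (hall : ∀ S, ∑ J ∈ S, w J ≤ ∑ J ∈ T S, w J) :
    ∃ N : ℕ, 0 < ∑ J, (round (N * w J)).toNat ∧
      ∀ S, ∑ J ∈ S, (round (N * w J)).toNat ≤ ∑ J ∈ T S, (round (N * w J)).toNat := by
  set d := Fintype.card κ
  set δ := min (1 / 2) (∑ J, w J) / (d + 1)
  have hδ : 0 < δ := by positivity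
  obtain ⟨N, hN, hround⟩ := exists_abs_nat_mul_sub_round_lt w hδ
  have herr : ∀ S, |∑ J ∈ S, ((round (N * w J)).toNat : ℝ) - N * ∑ J ∈ S, w J|
      < min (1 / 2) (∑ J, w J) := fun S => by
    refine (abs_sum_toNat_round_sub_le hw hround S).trans_lt ?_
    calc #S * δ ≤ d * δ := by gcongr; exact_mod_cast S.card_le_univ
      _ < _ := ?_
    rw [mul_div_assoc', div_lt_iff₀ (by positivity)]
    nlinarith [lt_min (one_half_pos (α := ℝ)) hpos]
  have hhalf := min_le_left (1 / 2 : ℝ) (∑ J, w J)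
  refine ⟨N, ?_, fun S => ?_⟩
  · have h := (abs_lt.1 (herr univ)).1
    have : (∑ J, w J) ≤ N * ∑ J, w J := le_mul_of_one_le_left hpos.le (by exact_mod_cast hN)
    have : (0 : ℝ) < ∑ J, ((round (N * w J)).toNat : ℝ) := by
      linarith [min_le_right (1 / 2 : ℝ) (∑ J, w J)]
    exact_mod_cast this
  · have h1 := (abs_lt.1 (herr S)).2
    have h2 := (abs_lt.1 (herr (T S))).1
    have h3 := mul_le_mul_of_nonneg_left (hall S) (Nat.cast_nonneg N)
    have : (∑ J ∈ S, ((round (N * w J)).toNat : ℝ))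
        < ∑ J ∈ T S, ((round (N * w J)).toNat : ℝ) + 1 := by
      linarith
    exact Nat.le_of_lt_succ (by exact_mod_cast this)

theorem exists_perm_sigma_mem_of_hall {κ : Type*} [Fintype κ] [DecidableEq κ] (n : κ → ℕ)
    (t : κ → Finset κ) (hall : ∀ S : Finset κ, ∑ J ∈ S, n J ≤ ∑ J ∈ S.biUnion t, n J) :
    ∃ φ : Equiv.Perm (Σ J, Fin (n J)), ∀ x, (φ x).1 ∈ t x.1 := by
  let t' : (Σ J, Fin (n J)) → Finset (Σ J, Fin (n J)) := fun x => (t x.1).sigma fun _ => univ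
  have hall' : ∀ s : Finset (Σ J, Fin (n J)), #s ≤ #(s.biUnion t') := by
    intro s
    have hs : s ⊆ (s.image Sigma.fst).sigma fun _ => univ := fun x hx =>
      mem_sigma.2 ⟨mem_image_of_mem _ hx, mem_univ _⟩
    have ht : s.biUnion t' = ((s.image Sigma.fst).biUnion t).sigma fun _ => univ := by
      ext x; simp [t']
    calc #s ≤ ∑ J ∈ s.image Sigma.fst, n J := by simpa using card_le_card hs
      _ ≤ ∑ J ∈ (s.image Sigma.fst).biUnion t, n J := hall _
      _ = #(s.biUnion t') := by simp [ht]
  obtain ⟨φ, hφinj, hφt⟩ := (all_card_le_biUnion_card_iff_exists_injective t').1 hall'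
  exact ⟨Equiv.ofBijective φ hφinj.bijective_of_finite, fun x => (mem_sigma.1 (hφt x)).1⟩

end Hall

def sigmaShift {κ G : Type*} [AddGroup G] (m : κ → ℕ) (g : G) :
    Equiv.Perm (Σ J : κ × G, Fin (m J.1)) where
  toFun x := ⟨(x.1.1, x.1.2 + g), x.2⟩
  invFun x := ⟨(x.1.1, x.1.2 - g), x.2⟩
  left_inv := by rintro ⟨⟨i, t⟩, k⟩; simp
  right_inv := by rintro ⟨⟨i, t⟩, k⟩; simp

@[simp]
theorem sigmaShift_apply {κ G : Type*} [AddGroup G] (m : κ → ℕ) (g : G)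
    (x : Σ J : κ × G, Fin (m J.1)) : sigmaShift m g x = ⟨(x.1.1, x.1.2 + g), x.2⟩ :=
  rfl

theorem sigmaShift_one_apply_apply_apply {κ : Type*} (m : κ → ℕ)
    (x : Σ J : κ × Fin 3, Fin (m J.1)) :
    sigmaShift m 1 (sigmaShift m 1 (sigmaShift m 1 x)) = x := by
  obtain ⟨⟨i, t⟩, k⟩ := x
  have h : t + 1 + 1 + 1 = t := by omega
  simp only [sigmaShift_apply]
  rw [h]

theorem exists_fin_equivariant_matching {Y κ : Type*} [Fintype κ] [DecidableEq κ] (σ : Y → Y)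
    (r : κ × Fin 3 → Y) (hr : ∀ J, r (J.1, J.2 + 1) = σ (r J)) (m : κ → ℕ)
    (hm : 0 < ∑ J : κ × Fin 3, m J.1) (R : Y → Y → Prop) (t : κ × Fin 3 → Finset (κ × Fin 3))
    (ht : ∀ J, ∀ J' ∈ t J, R (r J) (r J'))
    (hall : ∀ S, ∑ J ∈ S, m J.1 ≤ ∑ J ∈ S.biUnion t, m J.1) :
    ∃ M : ℕ, 0 < M ∧ ∃ (p : Fin M → Y) (φ σt : Equiv.Perm (Fin M)),
      (∀ i, σt (σt (σt i)) = i) ∧ (∀ i, p (σt i) = σ (p i)) ∧ ∀ i, R (p i) (p (φ i)) := by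
  obtain ⟨φ, hφ⟩ := exists_perm_sigma_mem_of_hall (fun J => m J.1) t hall
  set e := Fintype.equivFin (Σ J : κ × Fin 3, Fin (m J.1))
  have hcard : 0 < Fintype.card (Σ J : κ × Fin 3, Fin (m J.1)) := by simpa using hm
  refine ⟨_, hcard, fun i => r (e.symm i).1, e.permCongr φ, e.permCongr (sigmaShift m 1),
    fun i => ?_, fun i => ?_, fun i => ?_⟩
  · simp only [Equiv.permCongr_apply, Equiv.symm_apply_apply, sigmaShift_one_apply_apply_apply,
      Equiv.apply_symm_apply]
  · simp [Equiv.permCongr_apply, hr]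
  · simpa [Equiv.permCongr_apply] using ht _ _ (hφ (e.symm i))

section Levy

variable {Y Z : Type*} [TopologicalSpace Y] [CompactSpace Y] [MeasurableSpace Y]
  [OpensMeasurableSpace Y] [MetricSpace Z] [MeasurableSpace Z] [BorelSpace Z]
  {μ : Measure Y} {f g : Y → Z}

theorem map_le_map_thickening_of_diam_lt (hf : Continuous f) (hg : Continuous g) {ε : ℝ}
    (hε : Metric.diam (Set.range f ∪ Set.range g) < ε) (A : Set Z) :
    μ.map f A ≤ μ.map g (Metric.thickening ε A) := by
  rcases (A ∩ Set.range f).eq_empty_or_nonempty with hA | ⟨_, hzA, y₀, rfl⟩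
  · have hcompl : MeasurableSet (Set.range f)ᶜ :=
      (isCompact_range hf).isClosed.measurableSet.compl
    calc μ.map f A ≤ μ.map f (Set.range f)ᶜ :=
          measure_mono fun z hz hzf => hA.subset ⟨hz, hzf⟩
      _ = 0 := by simp [Measure.map_apply hf.measurable hcompl]
      _ ≤ _ := zero_le
  · have hbdd := ((isCompact_range hf).union (isCompact_range hg)).isBounded
    have hpre : g ⁻¹' Metric.thickening ε A = Set.univ := Set.eq_univ_of_forall fun x =>
      Metric.mem_thickening_iff.2 ⟨f y₀, hzA, (Metric.dist_le_diam_of_mem hbdd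
        (Or.inr ⟨x, rfl⟩) (Or.inl ⟨y₀, rfl⟩)).trans_lt hε⟩
    calc μ.map f A ≤ μ.map f Set.univ := measure_mono (Set.subset_univ A)
      _ = μ.map g (Metric.thickening ε A) := by
        rw [Measure.map_apply hf.measurable .univ,
          Measure.map_apply hg.measurable Metric.isOpen_thickening.measurableSet, hpre,
          Set.preimage_univ]

theorem exists_thickening_of_levyDist_lt (hf : Continuous f) (hg : Continuous g) {b : ℝ}
    (h : levyDist (μ.map f) (μ.map g) < b) :
    ∃ ε, 0 < ε ∧ ε < b ∧ ∀ A, μ.map f A ≤ μ.map g (Metric.thickening ε A) := by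
  set D := Metric.diam (Set.range f ∪ Set.range g)
  have hne : {ε : ℝ | 0 < ε ∧ ∀ A, μ.map f A ≤ μ.map g (Metric.thickening ε A)}.Nonempty :=
    ⟨D + 1, by positivity, map_le_map_thickening_of_diam_lt hf hg (lt_add_one D)⟩
  obtain ⟨ε, ⟨hε0, hεA⟩, hεb⟩ := (csInf_lt_iff ⟨0, fun _ hx => hx.1.le⟩ hne).1 h
  exact ⟨ε, hε0, hεb, hεA⟩

end Levy

theorem exists_pos_le_dist_of_forall_ne {Y : Type*} [MetricSpace Y] [CompactSpace Y]
    [Nonempty Y] {σ : Y → Y} (hσ : Continuous σ) (hfree : ∀ x, σ x ≠ x) :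
    ∃ c, 0 < c ∧ ∀ x, c ≤ dist (σ x) x := by
  obtain ⟨x₀, -, hx₀⟩ := isCompact_univ.exists_isMinOn Set.univ_nonempty
    (hσ.dist continuous_id).continuousOn
  exact ⟨dist (σ x₀) x₀, dist_pos.2 (hfree x₀), fun x => hx₀ (Set.mem_univ x)⟩

theorem exists_measurable_fin_dist_lt {Y : Type*} [PseudoMetricSpace Y] [CompactSpace Y]
    [Nonempty Y] [MeasurableSpace Y] [OpensMeasurableSpace Y] {η : ℝ} (hη : 0 < η) :
    ∃ (n : ℕ) (c : Y → Fin n), Measurable c ∧ ∀ x y, c x = c y → dist x y < η := by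
  set e := TopologicalSpace.denseSeq Y
  obtain ⟨s, hs⟩ := isCompact_univ.elim_finite_subcover (fun k => Metric.ball (e k) (η / 2))
    (fun _ => Metric.isOpen_ball) fun x _ => Set.mem_iUnion.2 <|
      (TopologicalSpace.denseRange_denseSeq Y).exists_dist_lt x (half_pos hη)
  set N := s.sup id
  let ind := SimpleFunc.nearestPtInd e N
  have hnear : ∀ x, dist (e (ind x)) x < η / 2 := fun x => by
    obtain ⟨k, hk, hxk⟩ := Set.mem_iUnion₂.1 (hs (Set.mem_univ x))
    have h := SimpleFunc.edist_nearestPt_le e x (Finset.le_sup (f := id) hk)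
    rw [SimpleFunc.nearestPt, SimpleFunc.map_apply, edist_dist, edist_dist] at h
    exact (ENNReal.ofReal_le_ofReal_iff dist_nonneg).1 h |>.trans_lt (Metric.mem_ball'.1 hxk)
  refine ⟨N + 1, fun x => ⟨ind x, Nat.lt_succ_of_le (SimpleFunc.nearestPtInd_le e N x)⟩,
    measurable_to_countable' fun i => ?_, fun x y hxy => ?_⟩
  · convert SimpleFunc.measurableSet_fiber ind i.val using 1
    ext x; simp [Fin.ext_iff]
  · have hind : ind x = ind y := congrArg Fin.val hxy
    calc dist x y ≤ dist (e (ind x)) x + dist (e (ind y)) y := by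
          rw [← hind]; exact dist_triangle_left _ _ _
      _ < η := by linarith [hnear x, hnear y]

section OrbitColor

open Fin.NatCast

variable {Y κ : Type*} [LinearOrder κ]

-- Read at `(a, b, d) = (c x, c (σ x), c (σ (σ x)))` with distinct entries: the least entry, and
-- the number of `σ`-steps from the orbit point carrying it to `x`.
def minPhase (a b d : κ) : κ × Fin 3 :=
  if a < b ∧ a < d then (a, 0) else if d < a ∧ d < b then (d, 1) else (b, 2)

theorem minPhase_rotate {a b d : κ} (hab : a ≠ b) (hbd : b ≠ d) (hda : d ≠ a) :
    minPhase b d a = ((minPhase a b d).1, (minPhase a b d).2 + 1) := by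
  unfold minPhase
  split_ifs <;> grind

theorem minPhase_fst_of_snd_eq_zero {a b d : κ} (h : (minPhase a b d).2 = 0) :
    (minPhase a b d).1 = a := by
  unfold minPhase at h ⊢
  split_ifs at h ⊢ <;> simp_all

variable (c : Y → κ) (σ : Y → Y)

def orbitColor (x : Y) : κ × Fin 3 :=
  minPhase (c x) (c (σ x)) (c (σ (σ x)))

noncomputable def orbitSection [Nonempty Y] (J : κ × Fin 3) : Y :=
  σ^[J.2.val] (Classical.epsilon fun x => orbitColor c σ x = (J.1, 0))

variable {c σ}

theorem measurable_orbitColor [MeasurableSpace Y] [MeasurableSpace κ] [Countable κ]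
    [MeasurableSingletonClass κ] (hc : Measurable c) (hσ : Measurable σ) :
    Measurable (orbitColor c σ) :=
  (measurable_of_countable fun v : κ × κ × κ => minPhase v.1 v.2.1 v.2.2).comp
    (hc.prodMk ((hc.comp hσ).prodMk (hc.comp (hσ.comp hσ))))

theorem orbitColor_fst_of_snd_eq_zero {x : Y} (h : (orbitColor c σ x).2 = 0) :
    (orbitColor c σ x).1 = c x :=
  minPhase_fst_of_snd_eq_zero h

theorem orbitSection_succ [Nonempty Y] (hσ3 : ∀ x, σ (σ (σ x)) = x) (J : κ × Fin 3) :
    orbitSection c σ (J.1, J.2 + 1) = σ (orbitSection c σ J) := by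
  obtain ⟨i, t⟩ := J
  fin_cases t <;> simp [orbitSection, hσ3]

variable (hσ3 : ∀ x, σ (σ (σ x)) = x) (hc : ∀ x, c (σ x) ≠ c x)
include hσ3 hc

theorem orbitColor_apply (x : Y) :
    orbitColor c σ (σ x) = ((orbitColor c σ x).1, (orbitColor c σ x).2 + 1) := by
  have h := hc (σ (σ x))
  rw [hσ3] at h
  rw [orbitColor, orbitColor, hσ3, minPhase_rotate (hc x).symm (hc (σ x)).symm h.symm]

theorem orbitColor_iterate (k : ℕ) (x : Y) :
    orbitColor c σ (σ^[k] x) = ((orbitColor c σ x).1, (orbitColor c σ x).2 + (k : Fin 3)) := by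
  induction k with
  | zero => simp
  | succ k ih =>
    rw [Function.iterate_succ_apply', orbitColor_apply hσ3 hc, ih, Nat.cast_succ, add_assoc]

theorem exists_orbitColor_eq_zero (x : Y) :
    ∃ y, orbitColor c σ y = ((orbitColor c σ x).1, 0) :=
  ⟨σ^[(-(orbitColor c σ x).2).val] x, by rw [orbitColor_iterate hσ3 hc]; simp⟩

theorem orbitColor_orbitSection [Nonempty Y] (x : Y) :
    orbitColor c σ (orbitSection c σ (orbitColor c σ x)) = orbitColor c σ x := by
  rw [orbitSection, orbitColor_iterate hσ3 hc,
    Classical.epsilon_spec (exists_orbitColor_eq_zero hσ3 hc x)]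
  simp

theorem dist_lt_of_orbitColor_eq [PseudoMetricSpace Y] (hσ : Isometry σ) {η : ℝ}
    (hcη : ∀ x y, c x = c y → dist x y < η) {x y : Y} (h : orbitColor c σ x = orbitColor c σ y) :
    dist x y < η := by
  -- the same isometry `σ^[k]` moves both points to phase `0`, where the colour is `c`
  set k := (-(orbitColor c σ x).2).val
  have hiso : Isometry σ^[k] := by
    induction k with
    | zero => exact isometry_id
    | succ k ih => rw [Function.iterate_succ]; exact ih.comp hσ
  have hzero : ∀ z, orbitColor c σ z = orbitColor c σ x →
      orbitColor c σ (σ^[k] z) = ((orbitColor c σ x).1, 0) := fun z hz => by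
    rw [orbitColor_iterate hσ3 hc, hz]; simp [k]
  have hx := orbitColor_fst_of_snd_eq_zero (c := c) (by rw [hzero x rfl])
  have hy := orbitColor_fst_of_snd_eq_zero (c := c) (by rw [hzero y h.symm])
  rw [hzero x rfl] at hx
  rw [hzero y h.symm] at hy
  rw [← hiso.dist_eq]
  exact hcη _ _ (hx.symm.trans hy)

end OrbitColor

theorem exists_equivariant_partition {Y : Type*} [MetricSpace Y] [CompactSpace Y] [Nonempty Y]
    [MeasurableSpace Y] [BorelSpace Y] {σ : Y → Y} (hσ : Isometry σ)
    (hσ3 : ∀ x, σ (σ (σ x)) = x) (hfree : ∀ x, σ x ≠ x) {η : ℝ} (hη : 0 < η) :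
    ∃ (n : ℕ) (q : Y → Fin n × Fin 3) (r : Fin n × Fin 3 → Y), Measurable q ∧
      (∀ x, q (σ x) = ((q x).1, (q x).2 + 1)) ∧ (∀ J, r (J.1, J.2 + 1) = σ (r J)) ∧
      ∀ x, dist (r (q x)) x < η := by
  obtain ⟨c₀, hc₀, hσc₀⟩ := exists_pos_le_dist_of_forall_ne hσ.continuous hfree
  obtain ⟨n, c, hcm, hcη⟩ := exists_measurable_fin_dist_lt (Y := Y) (lt_min hc₀ hη)
  have hc : ∀ x, c (σ x) ≠ c x := fun x h =>
    (hcη _ _ h).not_ge ((min_le_left _ _).trans (hσc₀ x))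
  refine ⟨n, orbitColor c σ, orbitSection c σ, measurable_orbitColor hcm hσ.continuous.measurable,
    orbitColor_apply hσ3 hc, orbitSection_succ hσ3, fun x => ?_⟩
  exact (dist_lt_of_orbitColor_eq hσ3 hc hσ hcη (orbitColor_orbitSection hσ3 hc x)).trans_le
    (min_le_right _ _)

theorem measure_preimage_singleton_eq_of_shift {Y κ : Type*} [MeasurableSpace Y]
    [MeasurableSpace κ] [MeasurableSingletonClass κ] {μ : Measure Y} {σ : Y → Y}
    (hσμ : MeasurePreserving σ μ μ) {q : Y → κ × Fin 3} (hq : Measurable q)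
    (hqσ : ∀ x, q (σ x) = ((q x).1, (q x).2 + 1)) (i : κ) (t : Fin 3) :
    μ (q ⁻¹' {(i, t)}) = μ (q ⁻¹' {(i, 0)}) := by
  have step : ∀ s : Fin 3, μ (q ⁻¹' {(i, s + 1)}) = μ (q ⁻¹' {(i, s)}) := fun s => by
    rw [← hσμ.measure_preimage (hq (measurableSet_singleton _)).nullMeasurableSet]
    congr 1
    ext x
    simp [hqσ, Prod.ext_iff]
  fin_cases t
  · rfl
  · exact step 0
  · exact (step 1).trans (step 0)

theorem sum_measureReal_fiber_le_of_thickening {Y Z κ : Type*} [MeasurableSpace Y]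
    [PseudoMetricSpace Z] [MeasurableSpace Z] [OpensMeasurableSpace Z] [MeasurableSpace κ]
    [MeasurableSingletonClass κ] [DecidableEq κ] {μ : Measure Y} [IsFiniteMeasure μ]
    {f g : Y → Z} (hf : AEMeasurable f μ) (hg : Measurable g) {ε : ℝ}
    (hε : ∀ A, μ.map f A ≤ μ.map g (Metric.thickening ε A)) {q : Y → κ} (hq : Measurable q)
    (t : κ → Finset κ) (hclose : ∀ x x', dist (f x) (g x') < ε → q x' ∈ t (q x))
    (S : Finset κ) :
    ∑ J ∈ S, μ.real (q ⁻¹' {J}) ≤ ∑ J ∈ S.biUnion t, μ.real (q ⁻¹' {J}) := by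
  have hfib : ∀ s : Finset κ, ∀ J ∈ s, MeasurableSet (q ⁻¹' {J}) :=
    fun _ _ _ => hq (measurableSet_singleton _)
  rw [sum_measureReal_preimage_singleton _ (hfib _), sum_measureReal_preimage_singleton _ (hfib _)]
  refine ENNReal.toReal_mono (measure_ne_top _ _) ?_
  set A := f '' (q ⁻¹' S)
  calc μ (q ⁻¹' S) ≤ μ.map f A := Measure.le_map_apply_image hf _
    _ ≤ μ.map g (Metric.thickening ε A) := hε A
    _ = μ (g ⁻¹' Metric.thickening ε A) :=
      Measure.map_apply hg Metric.isOpen_thickening.measurableSet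
    _ ≤ μ (q ⁻¹' (S.biUnion t)) := measure_mono fun x' hx' => by
      obtain ⟨_, ⟨x, hx, rfl⟩, hxx'⟩ := Metric.mem_thickening_iff.1 hx'
      simpa using ⟨q x, hx, hclose x x' (by rwa [dist_comm])⟩

theorem dist_le_of_lipschitzWith {Y Z : Type*} [PseudoMetricSpace Y] [PseudoMetricSpace Z]
    {f g : Y → Z} {Kf Kg : NNReal} (hf : LipschitzWith Kf f) (hg : LipschitzWith Kg g)
    (x x' y y' : Y) : dist (f y) (g y') ≤ Kf * dist y x + dist (f x) (g x') + Kg * dist x' y' :=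
  (dist_triangle4 _ (f x) (g x') _).trans <|
    add_le_add_three (hf.dist_le_mul y x) le_rfl (hg.dist_le_mul x' y')

/-- Measured Marriage Theorem 14.2.2 (equivariant part): given Lipschitz maps
`f, g : Y → Z` with `d_L(f_*μ, g_*μ) ≤ β` and a free measure-preserving
isometry `σ` of `Y` of order 3, there is a nonempty finite set `Ỹ`
(realized as `Fin m`, `m > 0`), a map `p : Ỹ → Y`, bijections `φ` and `σ̃`
of `Ỹ` with `σ̃³ = id`, `p ∘ σ̃ = σ ∘ p` and
`dist (f (p ỹ)) (g (p (φ ỹ))) ≤ 2β` for all `ỹ`. -/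
theorem stmt10 {Y Z : Type*} [MetricSpace Y] [CompactSpace Y]
    [MeasurableSpace Y] [BorelSpace Y]
    [MetricSpace Z] [MeasurableSpace Z] [BorelSpace Z]
    (μ : Measure Y) [IsFiniteMeasure μ] (hμ : 0 < μ Set.univ)
    (f g : Y → Z) {Kf Kg : NNReal} (hf : LipschitzWith Kf f) (hg : LipschitzWith Kg g)
    {β : ℝ} (hβ : 0 < β) (hd : levyDist (μ.map f) (μ.map g) ≤ β)
    (σ : Y → Y) (hσiso : Isometry σ) (hσmp : Measure.map σ μ = μ)
    (hσ3 : σ ∘ σ ∘ σ = id)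
    (hfree : ∀ y : Y, σ y ≠ y ∧ σ (σ y) ≠ y) :
    ∃ m : ℕ, 0 < m ∧ ∃ (p : Fin m → Y) (φ σt : Equiv.Perm (Fin m)),
      (∀ i, σt (σt (σt i)) = i) ∧
      (∀ i, p (σt i) = σ (p i)) ∧
      ∀ i, dist (f (p i)) (g (p (φ i))) ≤ 2 * β := by
  classical
  have : Nonempty Y := ⟨(nonempty_of_measure_ne_zero hμ.ne').some⟩
  have hσμ : MeasurePreserving σ μ μ := ⟨hσiso.continuous.measurable, hσmp⟩
  obtain ⟨ε, -, hε2β, hεA⟩ := exists_thickening_of_levyDist_lt hf.continuous hg.continuous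
    (hd.trans_lt (by linarith : β < 2 * β))
  obtain ⟨η, hη, hKη⟩ := exists_pos_mul_lt (sub_pos.2 hε2β) (Kf + Kg : ℝ)
  obtain ⟨n, q, r, hq, hqσ, hrσ, hrq⟩ :=
    exists_equivariant_partition hσiso (congrFun hσ3) (fun x => (hfree x).1) hη
  set t : Fin n × Fin 3 → Finset (Fin n × Fin 3) :=
    fun J => {J' | dist (f (r J)) (g (r J')) ≤ 2 * β}
  have hclose : ∀ x x', dist (f x) (g x') < ε → q x' ∈ t (q x) := fun x x' hxx' => by
    have := dist_le_of_lipschitzWith hf hg x x' (r (q x)) (r (q x'))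
    rw [dist_comm x'] at this
    simp only [t, Finset.mem_filter, Finset.mem_univ, true_and]
    nlinarith [hrq x, hrq x', Kf.coe_nonneg, Kg.coe_nonneg]
  -- weights read off phase `0`, so that the multiplicities are constant along orbits by definition
  set v : Fin n → ℝ := fun i => μ.real (q ⁻¹' {(i, 0)})
  have hv : ∀ J : Fin n × Fin 3, v J.1 = μ.real (q ⁻¹' {J}) := fun J =>
    congrArg ENNReal.toReal (measure_preimage_singleton_eq_of_shift hσμ hq hqσ J.1 J.2).symm
  have hpos : 0 < ∑ J : Fin n × Fin 3, v J.1 := by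
    simp only [hv]
    rw [sum_measureReal_preimage_singleton _ fun J _ => hq (measurableSet_singleton J)]
    simpa [measureReal_def] using ENNReal.toReal_pos hμ.ne' (measure_ne_top μ _)
  obtain ⟨N, hNpos, hNhall⟩ := exists_nat_hall_of_real_hall (fun J : Fin n × Fin 3 => v J.1)
    (fun _ => measureReal_nonneg) hpos (fun S => S.biUnion t) fun S => by
      simpa only [hv] using sum_measureReal_fiber_le_of_thickening
        hf.continuous.aemeasurable hg.continuous.measurable hεA hq t hclose S
  exact exists_fin_equivariant_matching σ r hrσ (fun i => (round (N * v i)).toNat) hNpos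
    (fun a b => dist (f a) (g b) ≤ 2 * β) t (fun J J' hJ' => (Finset.mem_filter.1 hJ').2) hNhall
end

section
/- Let Z be a metric space, n ≥ 1, β ≥ 0, and let y, z : Fin n → Z be two finite families of points. If d_L(Σ_{i} δ_{y(i)}, Σ_{i} δ_{z(i)}) ≤ β (where δ_w is the Dirac mass at w), then there exists a permutation σ of Fin n such that dist(y(i), z(σ(i))) ≤ β for every i. -/
open MeasureTheory

open scoped ENNReal Classical

section Aux

variable {Z : Type*} [MetricSpace Z] [MeasurableSpace Z] [BorelSpace Z]
    {n : ℕ} (y z : Fin n → Z)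

private lemma sum_dirac_apply (w : Fin n → Z) (A : Set Z) :
    (∑ i : Fin n, Measure.dirac (w i)) A
      = ((Finset.univ.filter fun i => w i ∈ A).card : ℝ≥0∞) := by
  classical
  rw [Measure.finset_sum_apply]
  simp only [Measure.dirac_apply, Set.indicator_apply, Pi.one_apply]
  rw [Finset.sum_boole]

end Aux


/-- The Hall-marriage core of the proof of the Measured Marriage Theorem
14.2.2: if the sums of Dirac masses at `y i` and at `z i` are at
Lévy–Prokhorov distance at most `β`, then there is a permutation `σ` matching
each `y i` to some `z (σ i)` at distance at most `β`. -/
theorem stmt11 {Z : Type*} [MetricSpace Z] [MeasurableSpace Z] [BorelSpace Z]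
    {n : ℕ} (hn : 1 ≤ n) {β : ℝ} (hβ : 0 ≤ β) (y z : Fin n → Z)
    (hd : levyDist (∑ i : Fin n, Measure.dirac (y i))
      (∑ i : Fin n, Measure.dirac (z i)) ≤ β) :
    ∃ σ : Equiv.Perm (Fin n), ∀ i, dist (y i) (z (σ i)) ≤ β := by
  classical
  set μ := ∑ i : Fin n, Measure.dirac (y i)
  set ν := ∑ i : Fin n, Measure.dirac (z i)
  haveI : Nonempty (Fin n) := ⟨⟨0, hn⟩⟩
  -- the defining set is nonempty
  have hPne : ((Finset.univ : Finset (Fin n × Fin n))).Nonempty := Finset.univ_nonempty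
  set M : ℝ := Finset.univ.sup' hPne fun p : Fin n × Fin n => dist (y p.1) (z p.2) with hM
  have hM0 : 0 ≤ M := le_trans dist_nonneg (Finset.le_sup' (f := fun p : Fin n × Fin n => dist (y p.1) (z p.2)) (Finset.mem_univ (⟨0, hn⟩, ⟨0, hn⟩)))
  have hbig : (M + 1) ∈ {ε : ℝ | 0 < ε ∧ ∀ A : Set Z, μ A ≤ ν (Metric.thickening ε A)} := by
    refine ⟨by linarith, fun A => ?_⟩
    by_cases hA : ∃ i, y i ∈ A
    · obtain ⟨i, hi⟩ := hA
      have hall : ∀ j, z j ∈ Metric.thickening (M + 1) A := by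
        intro j
        refine Metric.mem_thickening_iff.2 ⟨y i, hi, ?_⟩
        have : dist (y i) (z j) ≤ M := Finset.le_sup' (f := fun p : Fin n × Fin n => dist (y p.1) (z p.2)) (Finset.mem_univ (i, j))
        rw [dist_comm] at this; linarith
      calc μ A ≤ μ Set.univ := measure_mono (Set.subset_univ _)
        _ = n := by rw [sum_dirac_apply]; simp
        _ ≤ ν (Metric.thickening (M+1) A) := by
            rw [sum_dirac_apply]
            have : (Finset.univ.filter fun j => z j ∈ Metric.thickening (M+1) A) = Finset.univ := by
              simp [Finset.filter_true_of_mem, hall]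
            rw [this]; simp
    · push_neg at hA
      have : μ A = 0 := by
        rw [sum_dirac_apply]
        simp [Finset.filter_false_of_mem, hA]
      simp [this]
  -- choose δ
  set P := (Finset.univ : Finset (Fin n × Fin n)).filter fun p => β < dist (y p.1) (z p.2) with hP
  have hδ : ∃ δ : ℝ, 0 < δ ∧ ∀ i j, dist (y i) (z j) < β + δ → dist (y i) (z j) ≤ β := by
    by_cases hPn : P.Nonempty
    · refine ⟨P.inf' hPn (fun p => dist (y p.1) (z p.2)) - β, ?_, ?_⟩
      · have hlt : β < P.inf' hPn fun p => dist (y p.1) (z p.2) :=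
          (Finset.lt_inf'_iff hPn).2 fun p hp => (Finset.mem_filter.1 hp).2
        linarith
      · intro i j hij
        by_contra h
        push_neg at h
        have hmem : (i, j) ∈ P := Finset.mem_filter.2 ⟨Finset.mem_univ _, h⟩
        have := Finset.inf'_le (fun p : Fin n × Fin n => dist (y p.1) (z p.2)) hmem
        simp only at this
        linarith
    · refine ⟨1, one_pos, fun i j _ => ?_⟩
      by_contra h
      exact hPn ⟨(i, j), Finset.mem_filter.2 ⟨Finset.mem_univ _, lt_of_not_ge h⟩⟩
  obtain ⟨δ, hδ0, hδprop⟩ := hδ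
  -- get ε in the set with ε < β + δ
  have hlt : levyDist μ ν < β + δ := lt_of_le_of_lt hd (by linarith)
  have hex : ∃ ε ∈ {ε : ℝ | 0 < ε ∧ ∀ A : Set Z, μ A ≤ ν (Metric.thickening ε A)}, ε < β + δ := by
    exact exists_lt_of_csInf_lt ⟨_, hbig⟩ hlt
  obtain ⟨ε, ⟨hε0, hεprop⟩, hεlt⟩ := hex
  -- Hall condition
  set t : Fin n → Finset (Fin n) := fun i => Finset.univ.filter fun j => dist (y i) (z j) ≤ β with ht
  have hall : ∀ S : Finset (Fin n), S.card ≤ (S.biUnion t).card := by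
    intro S
    set A : Set Z := ↑(S.image y) with hA
    have h1 : (S.card : ℝ≥0∞) ≤ μ A := by
      rw [show μ A = ∑ i : Fin n, Measure.dirac (y i) A from Measure.finset_sum_apply _ _ _]
      calc (S.card : ℝ≥0∞) = ∑ _i ∈ S, 1 := by simp
        _ = ∑ i ∈ S, Measure.dirac (y i) A := Finset.sum_congr rfl fun i hi =>
            (Measure.dirac_apply_of_mem (Finset.mem_coe.2 (Finset.mem_image_of_mem y hi))).symm
        _ ≤ ∑ i : Fin n, Measure.dirac (y i) A :=
            Finset.sum_le_sum_of_subset (Finset.subset_univ S)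
    have h2 := hεprop A
    have h3 : ν (Metric.thickening ε A)
        = ((Finset.univ.filter fun j => z j ∈ Metric.thickening ε A).card : ℝ≥0∞) :=
      sum_dirac_apply z _
    have h4 : (Finset.univ.filter fun j => z j ∈ Metric.thickening ε A) ⊆ S.biUnion t := by
      intro j hj
      obtain ⟨x, hxA, hxd⟩ := Metric.mem_thickening_iff.1 (Finset.mem_filter.1 hj).2
      obtain ⟨i, hiS, rfl⟩ : ∃ i ∈ S, y i = x := by
        simpa [hA] using hxA
      refine Finset.mem_biUnion.2 ⟨i, hiS, Finset.mem_filter.2 ⟨Finset.mem_univ _, ?_⟩⟩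
      rw [dist_comm] at hxd
      exact hδprop i j (by linarith)
    have : (S.card : ℝ≥0∞) ≤ ((S.biUnion t).card : ℝ≥0∞) := by
      calc (S.card : ℝ≥0∞) ≤ μ A := h1
        _ ≤ ν (Metric.thickening ε A) := h2
        _ = _ := h3
        _ ≤ _ := by exact_mod_cast Finset.card_le_card h4
    exact_mod_cast this
  obtain ⟨f, hfinj, hf⟩ := (Finset.all_card_le_biUnion_card_iff_exists_injective t).1 hall
  refine ⟨Equiv.ofBijective f (Finite.injective_iff_bijective.1 hfinj), fun i => ?_⟩
  have := hf i
  rw [ht] at this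
  exact (Finset.mem_filter.1 this).2
end

section
/- Let F be a nonempty compact topological space, let (d_i)_{i∈ℕ} be metrics on F each inducing the topology of F, let (z_i)_{i∈ℕ} be points of F, let α > 0 and 0 < κ < 1/2. Write C_i(β) := {u ∈ F : d_i(z_i, u) ≤ β}, and assume for every i that C_{i+1}(α) ⊆ C_i(κ·α) and d_i(u,v) ≤ κ·d_{i+1}(u,v) for all u, v ∈ C_{i+1}(α). Then the intersection ⋂_{i∈ℕ} C_i(α) consists of exactly one point x; moreover for all n and all q ≥ 1, and all u, v ∈ C_{n+q}(α), one has d_n(u,v) ≤ 2^{-q}·d_{n+q}(u,v) ≤ 2^{1-q}·α. -/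
/-- `d` is a metric on `F`. -/
def IsMetricDist {F : Type*} (d : F → F → ℝ) : Prop :=
  (∀ x y, 0 ≤ d x y) ∧ (∀ x y, d x y = 0 ↔ x = y) ∧ (∀ x y, d x y = d y x) ∧
    ∀ x y z, d x z ≤ d x y + d y z

/-- Convergence Corollary 5.1.3: given metrics `d i` inducing the topology of
the nonempty compact space `F`, basepoints `z i`, `α > 0`, `0 < κ < 1/2`, with
the cones `C_i(β) = {u | d i (z i) u ≤ β}` satisfying the `(α,κ)`-nesting
conditions, the intersection `⋂ i, C_i(α)` is a singleton, and for all `n`,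
`q ≥ 1`, and `u, v ∈ C_{n+q}(α)`,
`d n u v ≤ 2⁻ᑫ · d (n+q) u v ≤ 2^{1-q} · α`. -/
theorem stmt13 {F : Type*} [TopologicalSpace F] [CompactSpace F] [Nonempty F]
    (d : ℕ → F → F → ℝ) (hmet : ∀ i, IsMetricDist (d i))
    (htop : ∀ i, ∀ s : Set F,
      IsOpen s ↔ ∀ x ∈ s, ∃ ε > 0, {y : F | d i x y < ε} ⊆ s)
    (z : ℕ → F) {α κ : ℝ} (hα : 0 < α) (hκ0 : 0 < κ) (hκ : κ < 1 / 2)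
    (hsub : ∀ i, {u : F | d (i + 1) (z (i + 1)) u ≤ α} ⊆ {u : F | d i (z i) u ≤ κ * α})
    (hlip : ∀ i, ∀ u ∈ {u : F | d (i + 1) (z (i + 1)) u ≤ α},
      ∀ v ∈ {u : F | d (i + 1) (z (i + 1)) u ≤ α}, d i u v ≤ κ * d (i + 1) u v) :
    (∃ x : F, (⋂ i : ℕ, {u : F | d i (z i) u ≤ α}) = {x}) ∧
      ∀ n q : ℕ, 1 ≤ q →
        ∀ u ∈ {u : F | d (n + q) (z (n + q)) u ≤ α},
          ∀ v ∈ {u : F | d (n + q) (z (n + q)) u ≤ α},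
            d n u v ≤ (1 / 2) ^ q * d (n + q) u v ∧
              (1 / 2) ^ q * d (n + q) u v ≤ 2 * (1 / 2) ^ q * α := by
  have hd0 := fun i => (hmet i).1
  have heq := fun i => (hmet i).2.1
  have hsymm := fun i => (hmet i).2.2.1
  have htri := fun i => (hmet i).2.2.2
  set C : ℕ → Set F := fun i => {u : F | d i (z i) u ≤ α} with hC
  have hκα : κ * α ≤ α := by nlinarith
  have hdec : ∀ i, C (i + 1) ⊆ C i := fun i x hx => le_trans (hsub i hx) hκα
  -- key contraction estimate
  have key : ∀ n q : ℕ, 1 ≤ q → ∀ u ∈ C (n + q), ∀ v ∈ C (n + q),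
      d n u v ≤ κ ^ q * d (n + q) u v := by
    intro n q hq
    induction q with
    | zero => omega
    | succ q ih =>
      intro u hu v hv
      rcases Nat.eq_zero_or_pos q with h1 | h1
      · subst h1
        simpa using hlip n u hu v hv
      · have hq' : 1 ≤ q := h1
        have hu' : u ∈ C (n + q) := hdec _ (by exact_mod_cast hu)
        have hv' : v ∈ C (n + q) := hdec _ (by exact_mod_cast hv)
        have h2 := ih hq' u hu' v hv'
        have h3 : d (n + q) u v ≤ κ * d (n + q + 1) u v := hlip (n + q) u hu v hv
        calc d n u v ≤ κ ^ q * d (n + q) u v := h2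
          _ ≤ κ ^ q * (κ * d (n + q + 1) u v) := by
              exact mul_le_mul_of_nonneg_left h3 (pow_nonneg hκ0.le q)
          _ = κ ^ (q + 1) * d (n + (q + 1)) u v := by ring_nf
  have hκhalf : ∀ q : ℕ, κ ^ q ≤ (1 / 2 : ℝ) ^ q :=
    fun q => pow_le_pow_left₀ hκ0.le hκ.le q
  have hdiam : ∀ i, ∀ u ∈ C i, ∀ v ∈ C i, d i u v ≤ 2 * α := by
    intro i u hu v hv
    calc d i u v ≤ d i u (z i) + d i (z i) v := htri i u (z i) v
      _ ≤ α + α := add_le_add (by rw [hsymm]; exact hu) hv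
      _ = 2 * α := by ring
  have main : ∀ n q : ℕ, 1 ≤ q → ∀ u ∈ C (n + q), ∀ v ∈ C (n + q),
      d n u v ≤ (1 / 2) ^ q * d (n + q) u v ∧
        (1 / 2) ^ q * d (n + q) u v ≤ 2 * (1 / 2) ^ q * α := by
    intro n q hq u hu v hv
    constructor
    · exact le_trans (key n q hq u hu v hv)
        (mul_le_mul_of_nonneg_right (hκhalf q) (hd0 _ u v))
    · have := hdiam (n + q) u hu v hv
      have hp : (0:ℝ) ≤ (1/2)^q := by positivity
      nlinarith
  refine ⟨?_, main⟩
  -- closedness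
  have hclosed : ∀ i, IsClosed (C i) := by
    intro i
    rw [← isOpen_compl_iff, htop i]
    intro x hx
    simp only [C, Set.mem_compl_iff, Set.mem_setOf_eq, not_le] at hx
    refine ⟨d i (z i) x - α, by linarith, fun y hy => ?_⟩
    simp only [Set.mem_setOf_eq] at hy ⊢
    intro hcon
    simp only [C, Set.mem_setOf_eq] at hcon
    have := htri i (z i) y x
    rw [hsymm i y x] at this
    linarith
  have hne : ∀ i, (C i).Nonempty := fun i => ⟨z i, by
    simp only [C, Set.mem_setOf_eq, (heq i (z i) (z i)).mpr rfl]; exact hα.le⟩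
  obtain ⟨x, hx⟩ := IsCompact.nonempty_iInter_of_sequence_nonempty_isCompact_isClosed
    C hdec hne ((hclosed 0).isCompact) hclosed
  refine ⟨x, Set.eq_singleton_iff_unique_mem.mpr ⟨hx, fun y hy => ?_⟩⟩
  simp only [Set.mem_iInter] at hx hy
  -- show d 0 x y = 0
  have hzero : d 0 x y = 0 := by
    by_contra h
    have hpos : 0 < d 0 x y := lt_of_le_of_ne (hd0 0 x y) (Ne.symm h)
    obtain ⟨q, hq⟩ := exists_pow_lt_of_lt_one (div_pos hpos (by linarith : (0:ℝ) < 2 * α))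
      (by norm_num : (1/2:ℝ) < 1)
    have hq1 : 1 ≤ q + 1 := by omega
    have h1 : d 0 x y ≤ (1/2)^(q+1) * d (0 + (q+1)) x y :=
      (main 0 (q+1) hq1 x (hx _) y (hy _)).1
    have h2 : d (0 + (q+1)) x y ≤ 2 * α := hdiam _ x (hx _) y (hy _)
    have h3 : (1/2:ℝ)^(q+1) ≤ (1/2:ℝ)^q := by
      apply pow_le_pow_of_le_one (by norm_num) (by norm_num); omega
    have hp : (0:ℝ) < (1/2:ℝ)^(q+1) := by positivity
    have : d 0 x y ≤ (1/2)^q * (2*α) := by nlinarith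
    rw [lt_div_iff₀ (by linarith : (0:ℝ) < 2*α)] at hq
    linarith
  exact ((heq 0 x y).mp hzero).symm
end

section
/- Fix m ≥ 1. Let U be the set of m×m real matrices that are upper triangular with all diagonal entries equal to 1, and let L be the set of m×m real matrices that are lower triangular with all diagonal entries equal to 1, each with the subspace topology from the space of m×m real matrices. Then the multiplication map U × L → Matrix, (A, B) ↦ A·B, is injective and proper: the preimage of every compact set of matrices is compact. -/
lemma mul_entry' {m : ℕ} (A B : Matrix (Fin m) (Fin m) ℝ)
    (hA : ∀ i j : Fin m, j < i → A i j = 0) (hA1 : ∀ i, A i i = 1)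
    (hB : ∀ i j : Fin m, i < j → B i j = 0) (hB1 : ∀ i, B i i = 1)
    (i j : Fin m) :
    (A * B) i j = (if i ≤ j then A i j else B i j)
      + ∑ k ∈ Finset.univ.filter (fun k => max i j < k), A i k * B k j := by
  rw [Matrix.mul_apply,
    ← Finset.sum_filter_add_sum_filter_not Finset.univ (fun k => max i j < k)
      (fun k => A i k * B k j), add_comm]
  congr 1
  rw [Finset.sum_eq_single_of_mem (max i j)]
  · rcases le_or_gt i j with h | h
    · rw [max_eq_right h, if_pos h, hB1, mul_one]
    · rw [max_eq_left h.le, if_neg (not_le.mpr h), hA1, one_mul]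
  · simp only [Finset.mem_filter, Finset.mem_univ, true_and, not_lt]
    exact le_rfl
  · intro k hk hne
    simp only [Finset.mem_filter, not_lt] at hk
    rcases lt_max_iff.mp (lt_of_le_of_ne hk.2 hne) with h | h
    · rw [hA i k h, zero_mul]
    · rw [hB k j h, mul_zero]

lemma entryA' {m : ℕ} (A B : Matrix (Fin m) (Fin m) ℝ)
    (hA : ∀ i j : Fin m, j < i → A i j = 0) (hA1 : ∀ i, A i i = 1)
    (hB : ∀ i j : Fin m, i < j → B i j = 0) (hB1 : ∀ i, B i i = 1)
    {i j : Fin m} (hij : i ≤ j) :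
    A i j = (A * B) i j - ∑ k ∈ Finset.univ.filter (fun k => j < k), A i k * B k j := by
  rw [mul_entry' A B hA hA1 hB hB1 i j, if_pos hij, max_eq_right hij]
  ring

lemma entryB' {m : ℕ} (A B : Matrix (Fin m) (Fin m) ℝ)
    (hA : ∀ i j : Fin m, j < i → A i j = 0) (hA1 : ∀ i, A i i = 1)
    (hB : ∀ i j : Fin m, i < j → B i j = 0) (hB1 : ∀ i, B i i = 1)
    {i j : Fin m} (hji : j ≤ i) :
    B i j = (A * B) i j - ∑ k ∈ Finset.univ.filter (fun k => i < k), A i k * B k j := by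
  rw [mul_entry' A B hA hA1 hB hB1 i j, max_eq_left hji]
  rcases eq_or_lt_of_le hji with h | h
  · subst h; rw [if_pos le_rfl, hA1, hB1]; ring
  · rw [if_neg (not_le.mpr h)]; ring

lemma unip_unique' {m : ℕ} (A B A' B' : Matrix (Fin m) (Fin m) ℝ)
    (hA : ∀ i j : Fin m, j < i → A i j = 0) (hA1 : ∀ i, A i i = 1)
    (hB : ∀ i j : Fin m, i < j → B i j = 0) (hB1 : ∀ i, B i i = 1)
    (hA' : ∀ i j : Fin m, j < i → A' i j = 0) (hA1' : ∀ i, A' i i = 1)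
    (hB' : ∀ i j : Fin m, i < j → B' i j = 0) (hB1' : ∀ i, B' i i = 1)
    (h : A * B = A' * B') : A = A' ∧ B = B' := by
  have H : ∀ t : ℕ, ∀ i j : Fin m,
      (m - 1 - (j : ℕ) ≤ t → A i j = A' i j) ∧ (m - 1 - (i : ℕ) ≤ t → B i j = B' i j) := by
    intro t
    induction t with
    | zero =>
      intro i j
      constructor
      · intro hj
        rcases le_or_gt i j with hij | hij
        · have hempty : Finset.univ.filter (fun k : Fin m => j < k) = ∅ := by
            rw [Finset.filter_eq_empty_iff]
            intro k _
            have hk := k.isLt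
            have hj' := j.isLt
            simp only [not_lt, Fin.le_def]
            omega
          rw [entryA' A B hA hA1 hB hB1 hij, entryA' A' B' hA' hA1' hB' hB1' hij, h,
            hempty, Finset.sum_empty, Finset.sum_empty]
        · rw [hA i j hij, hA' i j hij]
      · intro hi
        rcases le_or_gt j i with hij | hij
        · have hempty : Finset.univ.filter (fun k : Fin m => i < k) = ∅ := by
            rw [Finset.filter_eq_empty_iff]
            intro k _
            have hk := k.isLt
            have hi' := i.isLt
            simp only [not_lt, Fin.le_def]
            omega
          rw [entryB' A B hA hA1 hB hB1 hij, entryB' A' B' hA' hA1' hB' hB1' hij, h,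
            hempty, Finset.sum_empty, Finset.sum_empty]
        · rw [hB i j hij, hB' i j hij]
    | succ t ih =>
      intro i j
      constructor
      · intro hj
        rcases le_or_gt i j with hij | hij
        · rw [entryA' A B hA hA1 hB hB1 hij, entryA' A' B' hA' hA1' hB' hB1' hij, h]
          congr 1
          refine Finset.sum_congr rfl fun k hk => ?_
          simp only [Finset.mem_filter, Finset.mem_univ, true_and, Fin.lt_def] at hk
          have hkm := k.isLt
          rw [(ih i k).1 (by omega), (ih k j).2 (by omega)]
        · rw [hA i j hij, hA' i j hij]
      · intro hi
        rcases le_or_gt j i with hij | hij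
        · rw [entryB' A B hA hA1 hB hB1 hij, entryB' A' B' hA' hA1' hB' hB1' hij, h]
          congr 1
          refine Finset.sum_congr rfl fun k hk => ?_
          simp only [Finset.mem_filter, Finset.mem_univ, true_and, Fin.lt_def] at hk
          have hkm := k.isLt
          rw [(ih i k).1 (by omega), (ih k j).2 (by omega)]
        · rw [hB i j hij, hB' i j hij]
  constructor
  · ext i j; exact (H m i j).1 (by omega)
  · ext i j; exact (H m i j).2 (by omega)

noncomputable def bnd (m : ℕ) (M : ℝ) : ℕ → ℝ
  | 0 => M
  | t + 1 => M + m * (bnd m M t) ^ 2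

lemma one_le_bnd {m : ℕ} {M : ℝ} (hM : 1 ≤ M) : ∀ t, 1 ≤ bnd m M t
  | 0 => hM
  | t + 1 => by
    have h := one_le_bnd (m := m) hM t
    have hm0 : (0 : ℝ) ≤ (m : ℝ) := Nat.cast_nonneg m
    simp only [bnd]
    nlinarith

lemma unip_bound' {m : ℕ} (A B : Matrix (Fin m) (Fin m) ℝ)
    (hA : ∀ i j : Fin m, j < i → A i j = 0) (hA1 : ∀ i, A i i = 1)
    (hB : ∀ i j : Fin m, i < j → B i j = 0) (hB1 : ∀ i, B i i = 1)
    (M : ℝ) (hM : 1 ≤ M) (hC : ∀ i j : Fin m, |(A * B) i j| ≤ M) :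
    ∀ t : ℕ, ∀ i j : Fin m,
      (m - 1 - (j : ℕ) ≤ t → |A i j| ≤ bnd m M t) ∧
      (m - 1 - (i : ℕ) ≤ t → |B i j| ≤ bnd m M t) := by
  intro t
  induction t with
  | zero =>
    intro i j
    constructor
    · intro hj
      rcases le_or_gt i j with hij | hij
      · have hempty : Finset.univ.filter (fun k : Fin m => j < k) = ∅ := by
          rw [Finset.filter_eq_empty_iff]
          intro k _
          have hk := k.isLt
          have hj' := j.isLt
          simp only [not_lt, Fin.le_def]
          omega
        rw [entryA' A B hA hA1 hB hB1 hij, hempty, Finset.sum_empty, sub_zero]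
        exact hC i j
      · rw [hA i j hij, abs_zero]; exact le_trans zero_le_one hM
    · intro hi
      rcases le_or_gt j i with hij | hij
      · have hempty : Finset.univ.filter (fun k : Fin m => i < k) = ∅ := by
          rw [Finset.filter_eq_empty_iff]
          intro k _
          have hk := k.isLt
          have hi' := i.isLt
          simp only [not_lt, Fin.le_def]
          omega
        rw [entryB' A B hA hA1 hB hB1 hij, hempty, Finset.sum_empty, sub_zero]
        exact hC i j
      · rw [hB i j hij, abs_zero]; exact le_trans zero_le_one hM
  | succ t ih =>
    have hb1 : (1 : ℝ) ≤ bnd m M t := one_le_bnd hM t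
    have hb0 : (0 : ℝ) ≤ bnd m M t := le_trans zero_le_one hb1
    intro i j
    have key : ∀ (s : Finset (Fin m)),
        (∀ k ∈ s, |A i k| ≤ bnd m M t ∧ |B k j| ≤ bnd m M t) →
        |∑ k ∈ s, A i k * B k j| ≤ (m : ℝ) * bnd m M t ^ 2 := by
      intro s hs
      calc |∑ k ∈ s, A i k * B k j| ≤ ∑ k ∈ s, |A i k * B k j| :=
            Finset.abs_sum_le_sum_abs _ _
        _ ≤ ∑ k ∈ s, bnd m M t ^ 2 := by
            refine Finset.sum_le_sum fun k hk => ?_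
            rw [abs_mul, sq]
            exact mul_le_mul (hs k hk).1 (hs k hk).2 (abs_nonneg _) hb0
        _ = s.card * bnd m M t ^ 2 := by rw [Finset.sum_const, nsmul_eq_mul]
        _ ≤ (m : ℝ) * bnd m M t ^ 2 := by
            have : (s.card : ℝ) ≤ (m : ℝ) := by
              have := Finset.card_le_card (Finset.subset_univ s)
              simp only [Finset.card_univ, Fintype.card_fin] at this
              exact_mod_cast this
            nlinarith
    constructor
    · intro hj
      rcases le_or_gt i j with hij | hij
      · rw [entryA' A B hA hA1 hB hB1 hij]
        have hsum := key (Finset.univ.filter (fun k : Fin m => j < k)) (by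
          intro k hk
          simp only [Finset.mem_filter, Finset.mem_univ, true_and, Fin.lt_def] at hk
          have hkm := k.isLt
          exact ⟨(ih i k).1 (by omega), (ih k j).2 (by omega)⟩)
        have := hC i j
        simp only [bnd]
        have habs := abs_sub (((A * B) i j)) (∑ k ∈ Finset.univ.filter (fun k : Fin m => j < k), A i k * B k j)
        calc |(A * B) i j - ∑ k ∈ Finset.univ.filter (fun k : Fin m => j < k), A i k * B k j|
            ≤ |(A * B) i j| + |∑ k ∈ Finset.univ.filter (fun k : Fin m => j < k), A i k * B k j| :=
              abs_sub _ _
          _ ≤ M + (m : ℝ) * bnd m M t ^ 2 := add_le_add (hC i j) hsum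
      · rw [hA i j hij, abs_zero]
        exact le_trans zero_le_one (one_le_bnd hM (t + 1))
    · intro hi
      rcases le_or_gt j i with hij | hij
      · rw [entryB' A B hA hA1 hB hB1 hij]
        have hsum := key (Finset.univ.filter (fun k : Fin m => i < k)) (by
          intro k hk
          simp only [Finset.mem_filter, Finset.mem_univ, true_and, Fin.lt_def] at hk
          have hkm := k.isLt
          exact ⟨(ih i k).1 (by omega), (ih k j).2 (by omega)⟩)
        simp only [bnd]
        calc |(A * B) i j - ∑ k ∈ Finset.univ.filter (fun k : Fin m => i < k), A i k * B k j|
            ≤ |(A * B) i j| + |∑ k ∈ Finset.univ.filter (fun k : Fin m => i < k), A i k * B k j| :=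
              abs_sub _ _
          _ ≤ M + (m : ℝ) * bnd m M t ^ 2 := add_le_add (hC i j) hsum
      · rw [hB i j hij, abs_zero]
        exact le_trans zero_le_one (one_le_bnd hM (t + 1))


/-- The upper unitriangular `m × m` real matrices, with the subspace topology
from the space of matrices. -/
abbrev UnipUpper (m : ℕ) : Type :=
  {A : Matrix (Fin m) (Fin m) ℝ // (∀ i j : Fin m, j < i → A i j = 0) ∧ ∀ i, A i i = 1}

/-- The lower unitriangular `m × m` real matrices, with the subspace topology
from the space of matrices. -/
abbrev UnipLower (m : ℕ) : Type :=
  {A : Matrix (Fin m) (Fin m) ℝ // (∀ i j : Fin m, i < j → A i j = 0) ∧ ∀ i, A i i = 1}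

/-- The core claim in the proof of Proposition 9.6.1: the multiplication map
`U × L → Matrix`, `(A,B) ↦ A·B`, from the product of the upper and lower
unitriangular matrices is injective and proper (preimages of compact sets of
matrices are compact). -/

theorem stmt14 {m : ℕ} (hm : 1 ≤ m) :
    Function.Injective
      (fun p : UnipUpper m × UnipLower m => (p.1.1 * p.2.1 : Matrix (Fin m) (Fin m) ℝ)) ∧
    ∀ K : Set (Matrix (Fin m) (Fin m) ℝ), IsCompact K →
      IsCompact ((fun p : UnipUpper m × UnipLower m =>
        (p.1.1 * p.2.1 : Matrix (Fin m) (Fin m) ℝ)) ⁻¹' K) := by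
  constructor
  · rintro ⟨⟨A, hA0, hA1⟩, ⟨B, hB0, hB1⟩⟩ ⟨⟨A', hA0', hA1'⟩, ⟨B', hB0', hB1'⟩⟩ h
    simp only at h
    obtain ⟨h1, h2⟩ := unip_unique' A B A' B' hA0 hA1 hB0 hB1 hA0' hA1' hB0' hB1' h
    simp [Prod.ext_iff, Subtype.ext_iff, h1, h2]
  · intro K hK
    obtain ⟨M0, hM0⟩ : ∃ M0 : ℝ, ∀ C ∈ K, ∀ i j : Fin m, |C i j| ≤ M0 := by
      rcases K.eq_empty_or_nonempty with hKe | hKn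
      · exact ⟨0, by simp [hKe]⟩
      · have hcont : Continuous fun C : Matrix (Fin m) (Fin m) ℝ => ∑ i, ∑ j, |C i j| :=
          continuous_finset_sum _ fun i _ => continuous_finset_sum _ fun j _ =>
            (continuous_id.matrix_elem i j).abs
        obtain ⟨C0, hC0K, hC0⟩ := hK.exists_isMaxOn hKn hcont.continuousOn
        refine ⟨∑ i, ∑ j, |C0 i j|, fun C hC i j => ?_⟩
        have h1 : |C i j| ≤ ∑ j', |C i j'| :=
          Finset.single_le_sum (f := fun j' => |C i j'|)
            (fun k _ => abs_nonneg _) (Finset.mem_univ j)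
        have h2 : (∑ j', |C i j'|) ≤ ∑ i', ∑ j', |C i' j'| :=
          Finset.single_le_sum (f := fun i' => ∑ j', |C i' j'|)
            (fun k _ => Finset.sum_nonneg fun _ _ => abs_nonneg _) (Finset.mem_univ i)
        exact h1.trans (h2.trans (hC0 hC))
    set M : ℝ := max M0 1 with hMdef
    have hM1 : (1 : ℝ) ≤ M := le_max_right _ _
    set R : ℝ := bnd m M m with hRdef
    have he : Topology.IsEmbedding (fun p : UnipUpper m × UnipLower m =>
        ((p.1.1, p.2.1) : Matrix (Fin m) (Fin m) ℝ × Matrix (Fin m) (Fin m) ℝ)) :=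
      Topology.IsEmbedding.subtypeVal.prodMap Topology.IsEmbedding.subtypeVal
    rw [he.isCompact_iff]
    have himg : (fun p : UnipUpper m × UnipLower m => (p.1.1, p.2.1)) ''
        ((fun p : UnipUpper m × UnipLower m =>
          (p.1.1 * p.2.1 : Matrix (Fin m) (Fin m) ℝ)) ⁻¹' K)
        = {q : Matrix (Fin m) (Fin m) ℝ × Matrix (Fin m) (Fin m) ℝ |
            ((∀ i j : Fin m, j < i → q.1 i j = 0) ∧ ∀ i, q.1 i i = 1) ∧
            ((∀ i j : Fin m, i < j → q.2 i j = 0) ∧ ∀ i, q.2 i i = 1) ∧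
            q.1 * q.2 ∈ K} := by
      ext q
      constructor
      · rintro ⟨⟨⟨A, hA⟩, ⟨B, hB⟩⟩, hmem, rfl⟩
        exact ⟨hA, hB, hmem⟩
      · rintro ⟨h1, h2, h3⟩
        exact ⟨(⟨q.1, h1⟩, ⟨q.2, h2⟩), h3, rfl⟩
    rw [himg]
    have hboxc : IsCompact {A : Matrix (Fin m) (Fin m) ℝ | ∀ i j, A i j ∈ Set.Icc (-R) R} := by
      have heq : {A : Matrix (Fin m) (Fin m) ℝ | ∀ i j, A i j ∈ Set.Icc (-R) R}
          = Set.pi Set.univ (fun _ : Fin m => Set.pi Set.univ fun _ : Fin m => Set.Icc (-R) R) := by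
        ext A
        constructor
        · intro hA i _
          intro j _
          exact hA i j
        · intro hA i j
          exact hA i (Set.mem_univ i) j (Set.mem_univ j)
      rw [heq]
      exact isCompact_univ_pi fun _ => isCompact_univ_pi fun _ => isCompact_Icc
    refine IsCompact.of_isClosed_subset (hboxc.prod hboxc) ?_ ?_
    · have hc1 : ∀ (i j : Fin m), Continuous fun q :
          Matrix (Fin m) (Fin m) ℝ × Matrix (Fin m) (Fin m) ℝ => q.1 i j :=
        fun i j => continuous_fst.matrix_elem i j
      have hc2 : ∀ (i j : Fin m), Continuous fun q :
          Matrix (Fin m) (Fin m) ℝ × Matrix (Fin m) (Fin m) ℝ => q.2 i j :=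
        fun i j => continuous_snd.matrix_elem i j
      have e1 : {q : Matrix (Fin m) (Fin m) ℝ × Matrix (Fin m) (Fin m) ℝ |
            ((∀ i j : Fin m, j < i → q.1 i j = 0) ∧ ∀ i, q.1 i i = 1) ∧
            ((∀ i j : Fin m, i < j → q.2 i j = 0) ∧ ∀ i, q.2 i i = 1) ∧
            q.1 * q.2 ∈ K}
          = (⋂ (i : Fin m) (j : Fin m), {q : Matrix (Fin m) (Fin m) ℝ ×
              Matrix (Fin m) (Fin m) ℝ | j < i → q.1 i j = 0}) ∩
            ((⋂ (i : Fin m), {q : Matrix (Fin m) (Fin m) ℝ ×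
              Matrix (Fin m) (Fin m) ℝ | q.1 i i = 1}) ∩
            ((⋂ (i : Fin m) (j : Fin m), {q : Matrix (Fin m) (Fin m) ℝ ×
              Matrix (Fin m) (Fin m) ℝ | i < j → q.2 i j = 0}) ∩
            ((⋂ (i : Fin m), {q : Matrix (Fin m) (Fin m) ℝ ×
              Matrix (Fin m) (Fin m) ℝ | q.2 i i = 1}) ∩
            {q : Matrix (Fin m) (Fin m) ℝ × Matrix (Fin m) (Fin m) ℝ | q.1 * q.2 ∈ K}))) := by
        ext q
        simp only [Set.mem_setOf_eq, Set.mem_inter_iff, Set.mem_iInter]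
        tauto
      rw [e1]
      refine IsClosed.inter ?_ (IsClosed.inter ?_ (IsClosed.inter ?_ (IsClosed.inter ?_ ?_)))
      · refine isClosed_iInter fun i => isClosed_iInter fun j => ?_
        by_cases h : j < i
        · have : {q : Matrix (Fin m) (Fin m) ℝ × Matrix (Fin m) (Fin m) ℝ | j < i → q.1 i j = 0}
              = {q | q.1 i j = 0} := by ext q; simp [h]
          rw [this]
          exact isClosed_eq (hc1 i j) continuous_const
        · have : {q : Matrix (Fin m) (Fin m) ℝ × Matrix (Fin m) (Fin m) ℝ | j < i → q.1 i j = 0}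
              = Set.univ := by ext q; simp [h]
          rw [this]; exact isClosed_univ
      · exact isClosed_iInter fun i => isClosed_eq (hc1 i i) continuous_const
      · refine isClosed_iInter fun i => isClosed_iInter fun j => ?_
        by_cases h : i < j
        · have : {q : Matrix (Fin m) (Fin m) ℝ × Matrix (Fin m) (Fin m) ℝ | i < j → q.2 i j = 0}
              = {q | q.2 i j = 0} := by ext q; simp [h]
          rw [this]
          exact isClosed_eq (hc2 i j) continuous_const
        · have : {q : Matrix (Fin m) (Fin m) ℝ × Matrix (Fin m) (Fin m) ℝ | i < j → q.2 i j = 0}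
              = Set.univ := by ext q; simp [h]
          rw [this]; exact isClosed_univ
      · exact isClosed_iInter fun i => isClosed_eq (hc2 i i) continuous_const
      · exact IsClosed.preimage (continuous_fst.matrix_mul continuous_snd) hK.isClosed
    · rintro ⟨A, B⟩ ⟨⟨hA0, hA1⟩, ⟨hB0, hB1⟩, hABK⟩
      have hCM : ∀ i j : Fin m, |(A * B) i j| ≤ M :=
        fun i j => le_trans (hM0 _ hABK i j) (le_max_left _ _)
      have hbd := unip_bound' A B hA0 hA1 hB0 hB1 M hM1 hCM m
      constructor
      · intro i j
        rw [Set.mem_Icc, ← abs_le]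
        exact (hbd i j).1 (by omega)
      · intro i j
        rw [Set.mem_Icc, ← abs_le]
        exact (hbd i j).2 (by omega)
end

section
/- For every R > 0 the equation (e^ℓ + 1)/(e^ℓ − 1) = √((1 + e^{3R})/(e^R + e^{2R})) has a unique solution ℓ = ℓ(R) > 0, and exp((R/2)·ℓ(R)) tends to 1 as R → ∞. -/
/-!
The left-hand side is `coth (ℓ/2)`, a decreasing bijection of `(0, ∞)` onto `(1, ∞)` with inverse
`s ↦ log ((s + 1)/(s - 1))`, and the right-hand side simplifies to `s = √(2 cosh R - 1) > 1`.
Since `log (1 + x) ≤ x`, `ℓ(R) ≤ 2/(s - 1) ≤ 4 e^{-R/2}` for large `R`, so `R ℓ(R) → 0`.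
-/

open Real Filter Topology

noncomputable def twoArcoth (s : ℝ) : ℝ := log ((s + 1) / (s - 1))

section twoArcoth

variable {s : ℝ}

lemma one_lt_add_one_div_sub_one (hs : 1 < s) : 1 < (s + 1) / (s - 1) := by
  rw [one_lt_div (by linarith)]
  linarith

lemma twoArcoth_pos (hs : 1 < s) : 0 < twoArcoth s :=
  log_pos (one_lt_add_one_div_sub_one hs)

lemma exp_twoArcoth (hs : 1 < s) : exp (twoArcoth s) = (s + 1) / (s - 1) :=
  exp_log (by linarith [one_lt_add_one_div_sub_one hs])

lemma exp_twoArcoth_add_one_div_sub_one (hs : 1 < s) :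
    (exp (twoArcoth s) + 1) / (exp (twoArcoth s) - 1) = s := by
  have : s - 1 ≠ 0 := by linarith
  rw [exp_twoArcoth hs]
  field_simp
  ring

lemma eq_twoArcoth_of_exp_add_one_div_sub_one {l : ℝ} (hl : 0 < l)
    (h : (exp l + 1) / (exp l - 1) = s) : l = twoArcoth s := by
  have hexp : exp l - 1 ≠ 0 := by linarith [one_lt_exp_iff.mpr hl]
  have hs : s - 1 ≠ 0 := by
    rintro hs
    rw [sub_eq_zero.mp hs, div_eq_one_iff_eq hexp] at h
    linarith
  rw [twoArcoth, ← h]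
  field_simp
  ring_nf
  exact (log_exp l).symm

lemma twoArcoth_le (hs : 1 < s) : twoArcoth s ≤ 2 / (s - 1) :=
  calc twoArcoth s ≤ (s + 1) / (s - 1) - 1 :=
        log_le_sub_one_of_pos (by linarith [one_lt_add_one_div_sub_one hs])
    _ = 2 / (s - 1) := by
        rw [div_sub_one (by linarith)]
        ring

end twoArcoth

lemma one_add_exp_three_mul_div_exp_add_exp_two_mul (R : ℝ) :
    (1 + exp (3 * R)) / (exp R + exp (2 * R)) = 2 * cosh R - 1 := by
  have hR : exp R ≠ 0 := (exp_pos R).ne'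
  have h1 : exp R + 1 ≠ 0 := by positivity
  rw [cosh_eq, exp_neg, show 3 * R = R + R + R by ring, show 2 * R = R + R by ring]
  simp only [exp_add]
  field_simp
  ring

lemma one_lt_sqrt_two_mul_cosh_sub_one {R : ℝ} (hR : R ≠ 0) : 1 < √(2 * cosh R - 1) := by
  rw [lt_sqrt zero_le_one]
  linarith [one_lt_cosh.mpr hR]

lemma exp_half_div_two_add_one_le_sqrt {R : ℝ} (hR : 3 ≤ exp (R / 2)) :
    exp (R / 2) / 2 + 1 ≤ √(2 * cosh R - 1) := by
  have hsq : exp R = exp (R / 2) ^ 2 := by rw [← exp_nat_mul]; ring_nf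
  rw [le_sqrt (by positivity) (by linarith [one_le_cosh R]), cosh_eq]
  nlinarith [exp_pos (-R)]

lemma twoArcoth_sqrt_two_mul_cosh_sub_one_le {R : ℝ} (hR : 3 ≤ exp (R / 2)) :
    twoArcoth √(2 * cosh R - 1) ≤ 4 * exp (-(R / 2)) := by
  have hs := exp_half_div_two_add_one_le_sqrt hR
  calc twoArcoth √(2 * cosh R - 1) ≤ 2 / (√(2 * cosh R - 1) - 1) := twoArcoth_le (by linarith)
    _ ≤ 2 / (exp (R / 2) / 2) := by gcongr; linarith
    _ = 4 * exp (-(R / 2)) := by rw [exp_neg]; field_simp; norm_num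

lemma tendsto_mul_twoArcoth_sqrt_two_mul_cosh_sub_one :
    Tendsto (fun R => R / 2 * twoArcoth √(2 * cosh R - 1)) atTop (𝓝 0) := by
  have hhalf : Tendsto (fun R : ℝ => R / 2) atTop atTop := tendsto_id.atTop_div_const two_pos
  have hbound : Tendsto (fun R : ℝ => 4 * (R / 2) ^ 1 * exp (-(R / 2))) atTop (𝓝 0) := by
    simpa [mul_assoc] using ((tendsto_pow_mul_exp_neg_atTop_nhds_zero 1).comp hhalf).const_mul 4
  refine squeeze_zero' ?_ ?_ hbound
  all_goals filter_upwards [eventually_gt_atTop 0,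
    (tendsto_exp_atTop.comp hhalf).eventually_ge_atTop 3] with R hR hexp
  · exact mul_nonneg (by positivity)
      (twoArcoth_pos (one_lt_sqrt_two_mul_cosh_sub_one hR.ne')).le
  · calc R / 2 * twoArcoth √(2 * cosh R - 1) ≤ R / 2 * (4 * exp (-(R / 2))) := by
          gcongr; exact twoArcoth_sqrt_two_mul_cosh_sub_one_le hexp
      _ = 4 * (R / 2) ^ 1 * exp (-(R / 2)) := by ring

/-- Proposition 15.1.6(ii), as a real-analysis claim: for every `R > 0` the
equation `(e^ℓ + 1)/(e^ℓ − 1) = √((1 + e^{3R})/(e^R + e^{2R}))` has a unique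
positive solution `ℓ(R)`, and `exp((R/2)·ℓ(R)) → 1` as `R → ∞`. -/
theorem stmt16 :
    ∃ ℓ : ℝ → ℝ,
      (∀ R : ℝ, 0 < R →
        (0 < ℓ R ∧
          (Real.exp (ℓ R) + 1) / (Real.exp (ℓ R) - 1) =
            Real.sqrt ((1 + Real.exp (3 * R)) / (Real.exp R + Real.exp (2 * R)))) ∧
        ∀ l : ℝ, 0 < l →
          (Real.exp l + 1) / (Real.exp l - 1) =
            Real.sqrt ((1 + Real.exp (3 * R)) / (Real.exp R + Real.exp (2 * R))) →
          l = ℓ R) ∧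
      Tendsto (fun R : ℝ => Real.exp (R / 2 * ℓ R)) atTop (nhds 1) := by
  refine ⟨fun R => twoArcoth √(2 * cosh R - 1), fun R hR => ?_, ?_⟩
  · rw [one_add_exp_three_mul_div_exp_add_exp_two_mul]
    have hs := one_lt_sqrt_two_mul_cosh_sub_one hR.ne'
    exact ⟨⟨twoArcoth_pos hs, exp_twoArcoth_add_one_div_sub_one hs⟩,
      fun l hl h => eq_twoArcoth_of_exp_add_one_div_sub_one hl h⟩
  · simpa [Function.comp_def] using
      (continuous_exp.tendsto 0).comp tendsto_mul_twoArcoth_sqrt_two_mul_cosh_sub_one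
end

section
/- Let n ≥ 1, let L be a discrete additive subgroup of ℝⁿ (with the Euclidean norm), and let D > 0 be such that every point of ℝⁿ lies at distance at most D from some element of L. Then L is generated, as an additive group, by its elements of norm at most 2·D. -/
/-!
If `x ∈ L` has `‖x‖ > 2D`, pick `m ∈ L` within `D` of `x / 2`; then both `m` and `x - m` lie in `L`
and are strictly shorter than `x`. Since a discrete subgroup of a proper space meets every ball in
finitely many points, this splitting terminates, expressing `x` as a sum of elements of norm `≤ 2D`.
-/

open Metric

variable {E : Type*} [NormedAddCommGroup E]

theorem AddSubgroup.finite_ball_inter_of_discrete [ProperSpace E] (L : AddSubgroup E)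
    [DiscreteTopology L] (r : ℝ) : (ball (0 : E) r ∩ L).Finite :=
  finite_isBounded_inter_isClosed (isDiscrete_iff_discreteTopology.mpr ‹_›) isBounded_ball
    AddSubgroup.isClosed_of_discrete

theorem AddSubgroup.ncard_ball_inter_lt_of_norm_lt [ProperSpace E] (L : AddSubgroup E)
    [DiscreteTopology L] {x y : E} (hy : y ∈ L) (hyx : ‖y‖ < ‖x‖) :
    (ball (0 : E) ‖y‖ ∩ L).ncard < (ball (0 : E) ‖x‖ ∩ L).ncard := by
  refine Set.ncard_lt_ncard ?_ (L.finite_ball_inter_of_discrete _)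
  refine Set.ssubset_iff_of_subset (Set.inter_subset_inter_left _ (ball_subset_ball hyx.le))
    |>.mpr ⟨y, ⟨mem_ball_zero_iff.mpr hyx, hy⟩, fun h => ?_⟩
  exact (mem_ball_zero_iff.mp h.1).false

theorem exists_mem_norm_lt_and_norm_sub_lt [NormedSpace ℝ E] {L : Set E} {D : ℝ}
    (hcov : ∀ x : E, ∃ l ∈ L, dist x l ≤ D) {x : E} (hx : 2 * D < ‖x‖) :
    ∃ m ∈ L, ‖m‖ < ‖x‖ ∧ ‖x - m‖ < ‖x‖ := by
  obtain ⟨m, hm, hdist⟩ := hcov ((2 : ℝ)⁻¹ • x)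
  have hhalf : ‖(2 : ℝ)⁻¹ • x‖ = ‖x‖ / 2 := by
    rw [norm_smul, norm_inv, Real.norm_two]; ring
  have hm_le : ‖m‖ ≤ ‖x‖ / 2 + D := by
    calc ‖m‖ ≤ ‖(2 : ℝ)⁻¹ • x‖ + ‖m - (2 : ℝ)⁻¹ • x‖ := norm_le_norm_add_norm_sub' _ _
      _ ≤ ‖x‖ / 2 + D := by rw [hhalf, ← dist_eq_norm, dist_comm]; gcongr
  have hxm_le : ‖x - m‖ ≤ ‖x‖ / 2 + D := by
    calc ‖x - m‖ = ‖(2 : ℝ)⁻¹ • x + ((2 : ℝ)⁻¹ • x - m)‖ := by congr 1; module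
      _ ≤ ‖(2 : ℝ)⁻¹ • x‖ + ‖(2 : ℝ)⁻¹ • x - m‖ := norm_add_le _ _
      _ ≤ ‖x‖ / 2 + D := by rw [hhalf, ← dist_eq_norm]; gcongr
  exact ⟨m, hm, by linarith, by linarith⟩

theorem AddSubgroup.eq_closure_norm_le_two_mul_of_forall_exists_dist_le [NormedSpace ℝ E]
    [ProperSpace E] (L : AddSubgroup E) [DiscreteTopology L] {D : ℝ}
    (hcov : ∀ x : E, ∃ l ∈ L, dist x l ≤ D) :
    L = AddSubgroup.closure {l : E | l ∈ L ∧ ‖l‖ ≤ 2 * D} := by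
  refine le_antisymm (fun x hx => ?_) ((AddSubgroup.closure_le _).mpr fun _ h => h.1)
  induction x using (measure fun x : E => (ball (0 : E) ‖x‖ ∩ L).ncard).wf.induction with
  | h x ih =>
    by_cases hsmall : ‖x‖ ≤ 2 * D
    · exact AddSubgroup.subset_closure ⟨hx, hsmall⟩
    obtain ⟨m, hm, hmx, hxmx⟩ := exists_mem_norm_lt_and_norm_sub_lt hcov (not_le.mp hsmall)
    rw [← add_sub_cancel m x]
    exact add_mem (ih m (L.ncard_ball_inter_lt_of_norm_lt hm hmx) hm)
      (ih _ (L.ncard_ball_inter_lt_of_norm_lt (sub_mem hx hm) hxmx) (sub_mem hx hm))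

theorem stmt17_general {n : ℕ} (L : AddSubgroup (EuclideanSpace ℝ (Fin n)))
    (hdisc : DiscreteTopology L) {D : ℝ}
    (hcov : ∀ x : EuclideanSpace ℝ (Fin n), ∃ l ∈ L, dist x l ≤ D) :
    L = AddSubgroup.closure {l : EuclideanSpace ℝ (Fin n) | l ∈ L ∧ ‖l‖ ≤ 2 * D} :=
  L.eq_closure_norm_le_two_mul_of_forall_exists_dist_le hcov

/-- The claim used in the proof of Theorem 18.0.1: a discrete additive
subgroup `L` of Euclidean `ℝⁿ` whose `D`-neighborhoods cover `ℝⁿ` is generated,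
as an additive group, by its elements of norm at most `2·D`. -/
theorem stmt17 {n : ℕ} (hn : 1 ≤ n) (L : AddSubgroup (EuclideanSpace ℝ (Fin n)))
    (hdisc : DiscreteTopology L) {D : ℝ} (hD : 0 < D)
    (hcov : ∀ x : EuclideanSpace ℝ (Fin n), ∃ l ∈ L, dist x l ≤ D) :
    L = AddSubgroup.closure {l : EuclideanSpace ℝ (Fin n) | l ∈ L ∧ ‖l‖ ≤ 2 * D} :=
  stmt17_general L hdisc hcov
end
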